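/- arXiv:1605.02328 — 12 statements merged into one kernel-verified Lean document; each statement's English description precedes it below -/
import Mathlib

section
/- Let k ∈ {3, 4, 6} and let D be a squarefree positive integer. If a triple (t, r, q) of nonzero polynomials in ℚ[x] parameterizes a complete family of pairing-friendly elliptic curves with embedding degree k and CM discriminant D, then ρ(t, r, q) ≠ 1, i.e., deg q ≠ deg r. -/
open Polynomial

/-- `f ∈ ℚ[x]` represents integers: there is an integer `a` with `f(a) ∈ ℤ`. -/
def RepresentsIntegers (f : ℚ[X]) : Prop :=
  ∃ a n : ℤ, f.eval (a : ℚ) = (n : ℚ)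

/-- `f ∈ ℚ[x]` represents primes: `f` is nonconstant, irreducible over `ℚ`,
has positive leading coefficient, represents integers, and no prime number
divides every integer value `f(a)` with `a ∈ ℤ`, `f(a) ∈ ℤ`. -/
def RepresentsPrimes (f : ℚ[X]) : Prop :=
  0 < f.natDegree ∧ Irreducible f ∧ 0 < f.leadingCoeff ∧ RepresentsIntegers f ∧
    ∀ p : ℕ, p.Prime → ∃ a n : ℤ, f.eval (a : ℚ) = (n : ℚ) ∧ ¬ (p : ℤ) ∣ n

/-- `(t, r, q)` parameterizes a complete family of pairing-friendly elliptic curves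
with embedding degree `k` and CM discriminant `D`:
(i) `r` represents primes; (ii) `q` represents primes; (iii) `r ∣ q + 1 - t`;
(iv) `r ∣ Φ_k(t - 1)`; (v) `D·y² = 4q - t²` for some `y ∈ ℚ[x]`. -/
def IsCompleteFamily (k D : ℕ) (t r q : ℚ[X]) : Prop :=
  t ≠ 0 ∧ r ≠ 0 ∧ q ≠ 0 ∧
  RepresentsPrimes r ∧ RepresentsPrimes q ∧
  r ∣ (q + 1 - t) ∧
  r ∣ (cyclotomic k ℚ).comp (t - 1) ∧
  ∃ y : ℚ[X], (D : ℚ[X]) * y ^ 2 = 4 * q - t ^ 2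

/-!
Write `s = t - 1` and `Φ_k = X² + βX + 1` with `|β| ≤ 1`, and suppose `deg q = deg r`. As `Φ_k > 0`
on `ℚ`, `r` divides `Φ_k(s) ≠ 0`, so `deg q ≤ 2 deg t`; comparing leading coefficients in
`D·y² = 4q - t²` gives `deg q ≥ 2 deg t`. Hence `Φ_k(s)` and `q + 1 - t` are constant multiples of
`r`, and `q = e·Φ_k(s) + s` for some `e ≠ 0`. Then `4q - t² = A s² + B s + A` with `A = 4e - 1`,
`B = 4eβ + 2`. If `A = 0`, then `4q = s² + (β + 4)s + 1`, and an integer value of `q` would make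
`s(a)` an integer root of `x² + (β + 4)x + 1 - 4n`, which has none modulo 4. If `A ≠ 0`, then
`w = 2As + B` satisfies `w² - 4AD·y² = B² - 4A²`. A nonzero constant on the right forces `w` to be
constant, while `B = 2A` gives `q = e·t²`, which is reducible, and `B = -2A` gives `e(β + 2) = 0`.
-/

theorem cyclotomic_four (R : Type*) [CommRing R] : cyclotomic 4 R = X ^ 2 + 1 := by
  rw [show 4 = 2 * 2 by rfl, ← cyclotomic_expand_eq_cyclotomic Nat.prime_two dvd_rfl]
  simp

theorem cyclotomic_eq_X_sq_add_C_mul_X_add_one {k : ℕ} (hk : k = 3 ∨ k = 4 ∨ k = 6)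
    (R : Type*) [CommRing R] :
    ∃ β : ℤ, |β| ≤ 1 ∧ cyclotomic k R = X ^ 2 + C (β : R) * X + 1 := by
  rcases hk with rfl | rfl | rfl
  · exact ⟨1, by norm_num, by simp [cyclotomic_three]⟩
  · exact ⟨0, by norm_num, by simp [cyclotomic_four]⟩
  · exact ⟨-1, by norm_num, by simp [cyclotomic_six, sub_eq_add_neg]⟩

theorem cyclotomic_comp_ne_zero {k : ℕ} (hk : 2 < k) {R : Type*} [CommRing R] [LinearOrder R]
    [IsStrictOrderedRing R] (p : R[X]) : (cyclotomic k R).comp p ≠ 0 := by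
  intro h
  have hpos : 0 < ((cyclotomic k R).comp p).eval 0 := by
    rw [eval_comp]
    exact cyclotomic_pos hk _
  rw [h, eval_zero] at hpos
  exact hpos.false

theorem Int.sq_add_mul_add_one_ne_four_mul {β : ℤ} (hβ : |β| ≤ 1) (z n : ℤ) :
    z ^ 2 + (β + 4) * z + 1 ≠ 4 * n := by
  intro h
  have h4 := congrArg (Int.cast : ℤ → ZMod 4) h
  push_cast at h4
  rw [show (4 : ZMod 4) = 0 from rfl, zero_mul] at h4
  obtain rfl | rfl | rfl : β = -1 ∨ β = 0 ∨ β = 1 := by rw [abs_le] at hβ; omega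
  all_goals
    generalize (z : ZMod 4) = x at h4
    revert x h4
    decide

theorem Rat.sq_add_mul_add_one_ne_four_mul {β : ℤ} (hβ : |β| ≤ 1) (S : ℚ) (n : ℤ) :
    S ^ 2 + (β + 4) * S + 1 ≠ 4 * n := by
  intro h
  obtain ⟨z, rfl, -⟩ := exists_integer_of_is_root_of_monic
    (p := X ^ 2 + C (β + 4) * X + C (1 - 4 * n)) (by monicity!) (r := S)
    (by simp only [map_add, map_sub, map_mul, map_pow, map_one, map_ofNat, map_intCast, aeval_X,
          eq_intCast]
        linear_combination h)
  rw [eq_intCast] at h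
  exact Int.sq_add_mul_add_one_ne_four_mul hβ z n (by exact_mod_cast h)

theorem not_representsIntegers_of_four_mul_eq {β : ℤ} (hβ : |β| ≤ 1) {q s : ℚ[X]}
    (hq : 4 * q = s ^ 2 + (C (β : ℚ) + 4) * s + 1) : ¬ RepresentsIntegers q := by
  rintro ⟨a, n, ha⟩
  apply Rat.sq_add_mul_add_one_ne_four_mul hβ (s.eval (a : ℚ)) n
  have := congrArg (eval (a : ℚ)) hq
  simp only [eval_mul, eval_add, eval_pow, eval_C, eval_one, eval_ofNat, ha] at this
  linear_combination -this

theorem two_mul_natDegree_le_of_C_mul_sq_eq_sub_sq {K : Type*} [Field K] [LinearOrder K]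
    [IsStrictOrderedRing K] {c : K} (hc : 0 ≤ c) {p t y : K[X]} (h : C c * y ^ 2 = p - t ^ 2) :
    2 * t.natDegree ≤ p.natDegree := by
  by_contra! hp
  rw [← natDegree_pow] at hp
  have ht : t.leadingCoeff ≠ 0 := by
    rw [leadingCoeff_ne_zero]
    rintro rfl
    simp at hp
  have hlc := congrArg leadingCoeff h
  rw [leadingCoeff_sub_of_degree_lt' (degree_lt_degree hp), leadingCoeff_mul, leadingCoeff_C,
    leadingCoeff_pow, leadingCoeff_pow] at hlc
  linarith [sq_pos_of_ne_zero ht, mul_nonneg hc (sq_nonneg y.leadingCoeff)]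

theorem natDegree_eq_zero_of_sq_eq_C_mul_sq_add_C {K : Type*} [Field K] [NeZero (2 : K)]
    {w y : K[X]} {c Δ : K} (hΔ : Δ ≠ 0) (h : w ^ 2 = C c * y ^ 2 + C Δ) : w.natDegree = 0 := by
  by_contra hw
  have hy : y ≠ 0 := by
    rintro rfl
    have := congrArg natDegree h
    simp [natDegree_pow] at this
    exact hw this
  have hlc : w.leadingCoeff ^ 2 = c * y.leadingCoeff ^ 2 := by
    have hsub : w ^ 2 - C Δ = C c * y ^ 2 := by rw [h]; ring
    have hdeg : (C Δ).degree < (w ^ 2).degree := by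
      rw [degree_C hΔ]
      exact natDegree_pos_iff_degree_pos.mp (by rw [natDegree_pow]; omega)
    have := congrArg leadingCoeff hsub
    rwa [leadingCoeff_sub_of_degree_lt hdeg, leadingCoeff_mul, leadingCoeff_C, leadingCoeff_pow,
      leadingCoeff_pow] at this
  set e := w.leadingCoeff / y.leadingCoeff
  have hc : c = e ^ 2 := by
    rw [div_pow, hlc, mul_div_cancel_right₀ _ (pow_ne_zero 2 (leadingCoeff_ne_zero.mpr hy))]
  have hunit : IsUnit ((w - C e * y) * (w + C e * y)) := by
    rw [show (w - C e * y) * (w + C e * y) = C Δ by rw [hc, C_pow] at h; linear_combination h]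
    exact isUnit_C.mpr hΔ.isUnit
  have h₁ := natDegree_eq_zero_of_isUnit (isUnit_of_mul_isUnit_left hunit)
  have h₂ := natDegree_eq_zero_of_isUnit (isUnit_of_mul_isUnit_right hunit)
  have h2w : (C 2 * w).natDegree = 0 := by
    have := natDegree_add_le (w - C e * y) (w + C e * y)
    rw [show w - C e * y + (w + C e * y) = C 2 * w by rw [C_ofNat]; ring] at this
    omega
  exact hw (by rwa [natDegree_C_mul two_ne_zero] at h2w)

theorem exists_C_mul_eq_of_dvd_of_natDegree_le {K : Type*} [Field K] {r f g : K[X]}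
    (hf : f ≠ 0) (hg : g ≠ 0) (hrf : r ∣ f) (hrg : r ∣ g) (hf' : f.natDegree ≤ r.natDegree)
    (hg' : g.natDegree ≤ r.natDegree) : ∃ e : K, e ≠ 0 ∧ g = C e * f := by
  obtain ⟨u, hu⟩ := (associated_of_dvd_of_natDegree_le hrf hf hf').symm.trans
    (associated_of_dvd_of_natDegree_le hrg hg hg')
  obtain ⟨e, he, hCe⟩ := Polynomial.isUnit_iff.mp u.isUnit
  exact ⟨e, he.ne_zero, by rw [← hu, ← hCe, mul_comm]⟩

theorem not_irreducible_and_representsIntegers {β : ℤ} (hβ : |β| ≤ 1) {e : ℚ} (he : e ≠ 0)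
    {s q y : ℚ[X]} (hs : 0 < s.natDegree) (hq : q = C e * (s ^ 2 + C (β : ℚ) * s + 1) + s)
    {D : ℕ} (hy : (D : ℚ[X]) * y ^ 2 = 4 * q - (s + 1) ^ 2) :
    ¬ (Irreducible q ∧ RepresentsIntegers q) := by
  rintro ⟨hirr, hint⟩
  obtain ⟨A, hA⟩ : ∃ A : ℚ, A = 4 * e - 1 := ⟨_, rfl⟩
  obtain ⟨B, hB⟩ : ∃ B : ℚ, B = 4 * e * β + 2 := ⟨_, rfl⟩
  have hCA : C A = 4 * C e - 1 := by rw [hA, C_sub, C_mul, map_ofNat, C_1]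
  have hCB : C B = 4 * C e * C (β : ℚ) + 2 := by
    rw [hB, C_add, C_mul, C_mul, map_ofNat, map_ofNat]
  rcases eq_or_ne A 0 with hA0 | hA0
  · refine not_representsIntegers_of_four_mul_eq hβ (s := s) ?_ hint
    rw [hA0, map_zero] at hCA
    linear_combination 4 * hq - (s ^ 2 + C (β : ℚ) * s + 1) * hCA
  have hw : (C (2 * A) * s + C B) ^ 2 = C (4 * A * D) * y ^ 2 + C (B ^ 2 - 4 * A ^ 2) := by
    simp only [C_mul, C_sub, C_pow, map_ofNat, map_natCast]
    linear_combination (-4 * C A) * hy + 4 * C A * ((s ^ 2 + 1) * hCA + s * hCB - 4 * hq)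
  rcases eq_or_ne (B ^ 2 - 4 * A ^ 2) 0 with hΔ | hΔ
  · rcases mul_eq_zero.mp (show (B - 2 * A) * (B + 2 * A) = 0 by linear_combination hΔ)
      with hBA | hBA
    · have hCe : C e * C (β : ℚ) = 2 * C e - 1 := by
        have : e * β = 2 * e - 1 := by rw [hA, hB] at hBA; linarith
        simpa only [C_mul, C_sub, map_ofNat, C_1] using congrArg C this
      have hqt : q = (C e * (s + 1)) * (s + 1) := by linear_combination hq + s * hCe
      have hs1 : ¬ IsUnit (s + 1) :=
        not_isUnit_of_natDegree_pos _ (by rwa [← C_1, natDegree_add_C])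
      exact hs1 ((hirr.isUnit_or_isUnit hqt).resolve_left
        fun hu => hs1 (isUnit_of_mul_isUnit_right hu))
    · have hβ2 : (β : ℚ) + 2 ≠ 0 := by
        have : (-1 : ℚ) ≤ β := by exact_mod_cast (abs_le.mp hβ).1
        linarith
      exact mul_ne_zero he hβ2 (by rw [hA, hB] at hBA; linarith)
  · have := natDegree_eq_zero_of_sq_eq_C_mul_sq_add_C hΔ hw
    rw [natDegree_add_C, natDegree_C_mul (by simpa using hA0)] at this
    omega

theorem no_ideal_family_deg_3_4_6_general (k D : ℕ) (hk : k = 3 ∨ k = 4 ∨ k = 6)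
    (t r q : ℚ[X]) (h : IsCompleteFamily k D t r q) :
    q.natDegree ≠ r.natDegree := by
  obtain ⟨-, -, -, ⟨hr_pos, -⟩, ⟨-, hq_irr, -, hq_int, -⟩, hrq, hrP, y, hy⟩ := h
  have hs : (t - 1).natDegree = t.natDegree := by rw [← C_1, natDegree_sub_C]
  set P := (cyclotomic k ℚ).comp (t - 1)
  have hP0 : P ≠ 0 := cyclotomic_comp_ne_zero (by omega) (t - 1)
  have hPdeg : P.natDegree = 2 * t.natDegree := by
    have hφ : k.totient = 2 := by rcases hk with rfl | rfl | rfl <;> decide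
    rw [natDegree_comp, natDegree_cyclotomic, hφ, hs]
  have hrP_deg := natDegree_le_of_dvd hrP hP0
  intro hqr
  have htq : 2 * t.natDegree ≤ q.natDegree := by
    have := two_mul_natDegree_le_of_C_mul_sq_eq_sub_sq (Nat.cast_nonneg (α := ℚ) D)
      (p := 4 * q) (by rwa [map_natCast])
    rwa [← C_ofNat, natDegree_C_mul four_ne_zero] at this
  have hqt : (q + 1 - t).natDegree = q.natDegree := by
    rw [add_sub_assoc, natDegree_add_eq_left_of_natDegree_lt]
    rw [← neg_sub, natDegree_neg, hs]
    omega
  obtain ⟨e, he, hqe⟩ := exists_C_mul_eq_of_dvd_of_natDegree_le hP0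
    (fun h0 => by rw [h0, natDegree_zero] at hqt; omega) hrP hrq (by omega) (by omega)
  obtain ⟨β, hβ, hΦ⟩ := cyclotomic_eq_X_sq_add_C_mul_X_add_one hk ℚ
  have hP : P = (t - 1) ^ 2 + C (β : ℚ) * (t - 1) + 1 := by simp [P, hΦ]
  refine not_irreducible_and_representsIntegers hβ he (s := t - 1) (by omega) ?_
    (by rwa [sub_add_cancel]) ⟨hq_irr, hq_int⟩
  linear_combination hqe + C e * hP

/-- No ideal complete family with embedding degree 3, 4, or 6. -/
theorem no_ideal_family_deg_3_4_6 (k D : ℕ) (hk : k = 3 ∨ k = 4 ∨ k = 6)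
    (hD : Squarefree D) (hDpos : 0 < D) (t r q : ℚ[X])
    (h : IsCompleteFamily k D t r q) :
    q.natDegree ≠ r.natDegree :=
  no_ideal_family_deg_3_4_6_general k D hk t r q h
end

section
/- Let k = 8 and D ∈ {1, 2}, or k = 12 and D ∈ {1, 3} (these are exactly the squarefree positive integers D with √−D ∈ ℚ(ζ_k) for k = 8, 12). If a triple (t, r, q) of nonzero polynomials in ℚ[x] parameterizes a complete family of pairing-friendly elliptic curves with embedding degree k and CM discriminant D, and deg r ≠ 2·deg t, then ρ(t, r, q) ≠ 1, i.e., deg q ≠ deg r. -/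
open Polynomial

private lemma cyclotomic_eight_rat : cyclotomic 8 ℚ = X ^ 4 + 1 := by
  have h8 := prod_cyclotomic_eq_X_pow_sub_one (by norm_num : 0 < 8) ℚ
  have h4 := prod_cyclotomic_eq_X_pow_sub_one (by norm_num : 0 < 4) ℚ
  have hdiv : Nat.divisors 8 = insert 8 (Nat.divisors 4) := by decide
  have hnot : 8 ∉ Nat.divisors 4 := by decide
  rw [hdiv, Finset.prod_insert hnot, h4] at h8
  have hne : (X ^ 4 - 1 : ℚ[X]) ≠ 0 := fun hab => by
    simpa using congrArg (eval 0) hab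
  apply mul_right_cancel₀ hne
  rw [h8]; ring

private lemma cyclotomic_four_rat : cyclotomic 4 ℚ = X ^ 2 + 1 := by
  have h4 := prod_cyclotomic_eq_X_pow_sub_one (by norm_num : 0 < 4) ℚ
  have h2 := prod_cyclotomic_eq_X_pow_sub_one (by norm_num : 0 < 2) ℚ
  have hdiv : Nat.divisors 4 = insert 4 (Nat.divisors 2) := by decide
  have hnot : 4 ∉ Nat.divisors 2 := by decide
  rw [hdiv, Finset.prod_insert hnot, h2] at h4
  have hne : (X ^ 2 - 1 : ℚ[X]) ≠ 0 := fun hab => by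
    simpa using congrArg (eval 0) hab
  apply mul_right_cancel₀ hne
  rw [h4]; ring

private lemma cyclotomic_twelve_rat : cyclotomic 12 ℚ = X ^ 4 - X ^ 2 + 1 := by
  have h12 := prod_cyclotomic_eq_X_pow_sub_one (by norm_num : 0 < 12) ℚ
  have h6 := prod_cyclotomic_eq_X_pow_sub_one (by norm_num : 0 < 6) ℚ
  have hdiv : Nat.divisors 12 = insert 12 (insert 4 (Nat.divisors 6)) := by decide
  have hnot : 12 ∉ insert 4 (Nat.divisors 6) := by decide
  have hnot2 : 4 ∉ Nat.divisors 6 := by decide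
  rw [hdiv, Finset.prod_insert hnot, Finset.prod_insert hnot2, h6, cyclotomic_four_rat] at h12
  have hne : ((X ^ 2 + 1) * (X ^ 6 - 1) : ℚ[X]) ≠ 0 := fun hab => by
    simpa using congrArg (eval 0) hab
  apply mul_right_cancel₀ hne
  rw [h12]; ring

private lemma key_lemma (Dn : ℕ) (hDn : 0 < Dn)
    (Φ SS MM AA CC M4 : ℚ[X])
    (hAA : AA.natDegree = 1) (hCC : CC.natDegree ≤ 2)
    (hpos : ∀ c : ℚ, Φ.eval c ≠ 0)
    (hS2 : SS ^ 2 + (Dn : ℚ[X]) = Φ * MM)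
    (hrel : AA * SS * (X - 1) = CC + Φ * M4)
    (t r q : ℚ[X]) (ht0 : t ≠ 0) (hr0 : r ≠ 0) (hq0 : q ≠ 0)
    (hrdeg : 0 < r.natDegree) (hrirr : Irreducible r)
    (hqdeg : 0 < q.natDegree) (hqirr : Irreducible q)
    (hdvd1 : r ∣ q + 1 - t)
    (hdvd2 : r ∣ Φ.comp (t - 1))
    (y : ℚ[X]) (hy : (Dn : ℚ[X]) * y ^ 2 = 4 * q - t ^ 2)
    (hdeg : r.natDegree ≠ 2 * t.natDegree) :
    q.natDegree ≠ r.natDegree := by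
  intro heq
  set n := t.natDegree with hn
  have hDq : (Dn : ℚ) ≠ 0 := Nat.cast_ne_zero.2 hDn.ne'
  have hDpoly : (Dn : ℚ[X]) ≠ 0 := by
    rw [← C_eq_natCast]; exact C_ne_zero.mpr hDq
  -- step 1 : t is nonconstant
  have ht1 : 0 < n := by
    rcases Nat.eq_zero_or_pos n with h | h
    swap
    · exact h
    exfalso
    have hteq : t = C (t.coeff 0) := eq_C_of_natDegree_le_zero (le_of_eq h)
    have hcomp : Φ.comp (t - 1) = C (Φ.eval (t.coeff 0 - 1)) := by
      rw [hteq, ← C_1, ← C_sub, comp_C, coeff_C_zero]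
    rw [hcomp] at hdvd2
    have hne : (C (Φ.eval (t.coeff 0 - 1)) : ℚ[X]) ≠ 0 :=
      C_ne_zero.mpr (hpos _)
    have := natDegree_le_of_dvd hdvd2 hne
    rw [natDegree_C] at this
    omega
  -- step 2 : y ≠ 0
  have hy0 : y ≠ 0 := by
    intro h0
    rw [h0] at hy
    have h4 : (4 : ℚ[X]) * q = t ^ 2 := by linear_combination -hy
    have hX : (C (2⁻¹ : ℚ)) * (C (2⁻¹ : ℚ)) * 4 = (1 : ℚ[X]) := by
      rw [← C_mul, ← map_ofNat (Polynomial.C (R := ℚ)) 4, ← C_mul, ← C_1]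
      norm_num
    have hq2 : q = (C (2⁻¹ : ℚ) * t) * (C (2⁻¹ : ℚ) * t) := by
      linear_combination (C (2⁻¹ : ℚ) * C (2⁻¹ : ℚ)) * h4 - q * hX
    rcases hqirr.isUnit_or_isUnit hq2 with hu | hu <;>
    · have h0' := natDegree_eq_zero_of_isUnit hu
      rw [natDegree_C_mul (by norm_num : (2⁻¹ : ℚ) ≠ 0)] at h0'
      omega
  rcases lt_trichotomy q.natDegree (2 * n) with hlt | heq2 | hgt
  · -- impossible by leading coefficients
    exfalso
    have hd4 : degree ((4 : ℚ[X]) * q) < degree (t ^ 2) := by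
      rw [show ((4 : ℚ[X])) = C (4 : ℚ) from (map_ofNat C 4).symm,
        degree_C_mul (by norm_num : (4 : ℚ) ≠ 0)]
      apply degree_lt_degree
      rwa [natDegree_pow]
    have hlc : ((Dn : ℚ[X]) * y ^ 2).leadingCoeff = -(t ^ 2).leadingCoeff := by
      rw [hy]; exact leadingCoeff_sub_of_degree_lt' hd4
    rw [← C_eq_natCast, leadingCoeff_mul, leadingCoeff_C, leadingCoeff_pow,
      leadingCoeff_pow] at hlc
    have hyl : y.leadingCoeff ≠ 0 := leadingCoeff_ne_zero.2 hy0
    have htl : t.leadingCoeff ≠ 0 := leadingCoeff_ne_zero.2 ht0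
    have h1 : 0 < y.leadingCoeff ^ 2 :=
      lt_of_le_of_ne (sq_nonneg _) (Ne.symm (pow_ne_zero 2 hyl))
    have h2 : 0 < t.leadingCoeff ^ 2 :=
      lt_of_le_of_ne (sq_nonneg _) (Ne.symm (pow_ne_zero 2 htl))
    have h3 : 0 < (Dn : ℚ) := by exact_mod_cast hDn
    nlinarith [hlc]
  · exact hdeg (heq.symm.trans heq2)
  -- main case
  have hm : q.natDegree = 2 * y.natDegree := by
    have h1 : ((Dn : ℚ[X]) * y ^ 2).natDegree = 2 * y.natDegree := by
      rw [← C_eq_natCast, natDegree_C_mul hDq, natDegree_pow]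
    have h4q : ((4 : ℚ[X]) * q).natDegree = q.natDegree := by
      rw [show ((4 : ℚ[X])) = C (4 : ℚ) from (map_ofNat C 4).symm,
        natDegree_C_mul (by norm_num : (4 : ℚ) ≠ 0)]
    have h2 : ((4 : ℚ[X]) * q - t ^ 2).natDegree = q.natDegree := by
      rw [natDegree_sub_eq_left_of_natDegree_lt, h4q]
      rw [h4q, natDegree_pow]
      exact hgt
    rw [← h2, ← hy, h1]
  set m := y.natDegree with hmdef
  have hmn : n < m := by omega
  -- step 4 : r ∣ D y² + (t-2)²
  obtain ⟨u, hu⟩ := hdvd1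
  have hdvd3 : r ∣ (Dn : ℚ[X]) * y ^ 2 + (t - 2) ^ 2 :=
    ⟨4 * u, by linear_combination hy + 4 * hu⟩
  -- step 5 : field computations in  K = ℚ[x]/(r)
  haveI : Fact (Irreducible r) := ⟨hrirr⟩
  set τ := AdjoinRoot.mk r t with hτ
  set Y := AdjoinRoot.mk r y with hY
  set σs := AdjoinRoot.mk r (SS.comp (t - 1)) with hσs
  set aK := AdjoinRoot.mk r (AA.comp (t - 1)) with haK
  set cK := AdjoinRoot.mk r (CC.comp (t - 1)) with hcK
  have F0 : AdjoinRoot.mk r (Φ.comp (t - 1)) = 0 := AdjoinRoot.mk_eq_zero.2 hdvd2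
  have F1 : (Dn : AdjoinRoot r) * Y ^ 2 + (τ - 2) ^ 2 = 0 := by
    have h := AdjoinRoot.mk_eq_zero.mpr hdvd3
    simpa [map_add, map_mul, map_pow, map_sub, map_natCast, map_ofNat] using h
  have F2 : σs ^ 2 + (Dn : AdjoinRoot r) = 0 := by
    have hcomp : (SS.comp (t - 1)) ^ 2 + (Dn : ℚ[X]) = Φ.comp (t - 1) * MM.comp (t - 1) := by
      have h := congrArg (fun p => p.comp (t - 1)) hS2
      simpa [add_comp, pow_comp, mul_comp, natCast_comp] using h
    have h := congrArg (AdjoinRoot.mk r) hcomp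
    simpa [map_add, map_pow, map_mul, map_natCast, F0] using h
  have F3 : aK * σs * (τ - 2) = cK := by
    have hcomp : AA.comp (t - 1) * SS.comp (t - 1) * (t - 2)
        = CC.comp (t - 1) + Φ.comp (t - 1) * M4.comp (t - 1) := by
      have h := congrArg (fun p => p.comp (t - 1)) hrel
      simp only [mul_comp, sub_comp, X_comp, one_comp, add_comp] at h
      rw [show (t - 1 - 1 : ℚ[X]) = t - 2 by ring] at h
      exact h
    have h := congrArg (AdjoinRoot.mk r) hcomp
    simpa [map_add, map_mul, map_sub, map_ofNat, F0] using h
  have hfac : (((Dn : AdjoinRoot r)) * Y - σs * (τ - 2))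
      * (((Dn : AdjoinRoot r)) * Y + σs * (τ - 2)) = 0 := by
    linear_combination (Dn : AdjoinRoot r) * F1 - (τ - 2) ^ 2 * F2
  have hEx : ∃ E : ℚ[X], E.natDegree ≤ 2 * n ∧
      r ∣ AA.comp (t - 1) * ((Dn : ℚ[X]) * y) - E := by
    have ht1n : (t - 1).natDegree = n := by rw [← C_1, natDegree_sub_C]
    have hE : (CC.comp (t - 1)).natDegree ≤ 2 * n := by
      rw [natDegree_comp, ht1n]
      exact Nat.mul_le_mul_right n hCC
    rcases mul_eq_zero.mp hfac with h | h
    · refine ⟨CC.comp (t - 1), hE, AdjoinRoot.mk_eq_zero.mp ?_⟩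
      rw [map_sub, map_mul, map_mul, map_natCast]
      linear_combination aK * h + F3
    · refine ⟨-(CC.comp (t - 1)), by rwa [natDegree_neg], AdjoinRoot.mk_eq_zero.mp ?_⟩
      rw [map_sub, map_mul, map_mul, map_natCast, map_neg]
      linear_combination aK * h - F3
  obtain ⟨E, hEdeg, hdvdZ⟩ := hEx
  have ht1n : (t - 1).natDegree = n := by rw [← C_1, natDegree_sub_C]
  have hAc0 : AA.comp (t - 1) ≠ 0 := by
    intro h0
    have h1 := natDegree_comp (p := AA) (q := t - 1)
    rw [h0, natDegree_zero, hAA, one_mul, ht1n] at h1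
    omega
  have hAdeg : (AA.comp (t - 1) * ((Dn : ℚ[X]) * y)).natDegree = n + m := by
    rw [natDegree_mul hAc0 (mul_ne_zero hDpoly hy0), natDegree_comp, hAA, one_mul, ht1n,
      ← C_eq_natCast, natDegree_C_mul hDq]
  have hZ0 : AA.comp (t - 1) * ((Dn : ℚ[X]) * y) - E ≠ 0 := by
    intro h0
    have hAE : AA.comp (t - 1) * ((Dn : ℚ[X]) * y) = E := sub_eq_zero.mp h0
    rw [← hAE] at hEdeg
    omega
  have hZdeg : (AA.comp (t - 1) * ((Dn : ℚ[X]) * y) - E).natDegree ≤ n + m := by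
    refine (natDegree_sub_le _ _).trans ?_
    rw [hAdeg]
    omega
  have hfin := natDegree_le_of_dvd hdvdZ hZ0
  rw [← heq, hm] at hfin
  omega

theorem no_ideal_family_deg_8_12' (k D : ℕ)
    (hkD : (k = 8 ∧ (D = 1 ∨ D = 2)) ∨ (k = 12 ∧ (D = 1 ∨ D = 3)))
    (t r q : ℚ[X])
    (ht0 : t ≠ 0) (hr0 : r ≠ 0) (hq0 : q ≠ 0)
    (hrdeg : 0 < r.natDegree) (hrirr : Irreducible r)
    (hqdeg : 0 < q.natDegree) (hqirr : Irreducible q)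
    (hdvd1 : r ∣ q + 1 - t)
    (hdvd2 : r ∣ (cyclotomic k ℚ).comp (t - 1))
    (y : ℚ[X]) (hy : (D : ℚ[X]) * y ^ 2 = 4 * q - t ^ 2)
    (hdeg : r.natDegree ≠ 2 * t.natDegree) :
    q.natDegree ≠ r.natDegree := by
  rcases hkD with ⟨hk, hD⟩ | ⟨hk, hD⟩ <;> subst hk
  · rw [cyclotomic_eight_rat] at hdvd2
    rcases hD with hD | hD <;> subst hD
    · exact key_lemma 1 (by norm_num) (X ^ 4 + 1) (X ^ 2) 1 (X + 1) (-X ^ 2 - 1) 1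
        (by compute_degree!) (by compute_degree!)
        (fun c => by simp only [eval_add, eval_pow, eval_X, eval_one]; positivity)
        (by push_cast; ring) (by ring)
        t r q ht0 hr0 hq0 hrdeg hrirr hqdeg hqirr hdvd1 hdvd2 y hy hdeg
    · exact key_lemma 2 (by norm_num) (X ^ 4 + 1) (X ^ 3 + X) (X ^ 2 + 2) (X + 1) (-(2 * X)) X
        (by compute_degree!) (by compute_degree!)
        (fun c => by simp only [eval_add, eval_pow, eval_X, eval_one]; positivity)
        (by push_cast; ring) (by ring)
        t r q ht0 hr0 hq0 hrdeg hrirr hqdeg hqirr hdvd1 hdvd2 y hy hdeg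
  · rw [cyclotomic_twelve_rat] at hdvd2
    rcases hD with hD | hD <;> subst hD
    · exact key_lemma 1 (by norm_num) (X ^ 4 - X ^ 2 + 1) (X ^ 3) (X ^ 2 + 1) (X + 1) (-X) X
        (by compute_degree!) (by compute_degree!)
        (fun c => by
          simp only [eval_add, eval_sub, eval_pow, eval_X, eval_one]
          intro hc
          nlinarith [sq_nonneg (c ^ 2 - 1 / 2)])
        (by push_cast; ring) (by ring)
        t r q ht0 hr0 hq0 hrdeg hrirr hqdeg hqirr hdvd1 hdvd2 y hy hdeg
    · exact key_lemma 3 (by norm_num) (X ^ 4 - X ^ 2 + 1) (2 * X ^ 2 - 1) 4 (X + 1) (-X ^ 2 - 1) 2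
        (by compute_degree!) (by compute_degree!)
        (fun c => by
          simp only [eval_add, eval_sub, eval_pow, eval_X, eval_one]
          intro hc
          nlinarith [sq_nonneg (c ^ 2 - 1 / 2)])
        (by push_cast; ring) (by ring)
        t r q ht0 hr0 hq0 hrdeg hrirr hqdeg hqirr hdvd1 hdvd2 y hy hdeg

/-- No ideal complete family with embedding degree 8 or 12 when `√-D ∈ ℚ(ζ_k)`
(i.e. `D ∈ {1,2}` for `k = 8`, `D ∈ {1,3}` for `k = 12`) and `deg r ≠ 2 deg t`. -/
theorem no_ideal_family_deg_8_12 (k D : ℕ)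
    (hkD : (k = 8 ∧ (D = 1 ∨ D = 2)) ∨ (k = 12 ∧ (D = 1 ∨ D = 3)))
    (t r q : ℚ[X]) (h : IsCompleteFamily k D t r q)
    (hdeg : r.natDegree ≠ 2 * t.natDegree) :
    q.natDegree ≠ r.natDegree := by
  obtain ⟨ht0, hr0, hq0, ⟨hrdeg, hrirr, -, -, -⟩, ⟨hqdeg, hqirr, -, -, -⟩,
    hdvd1, hdvd2, y, hy⟩ := h
  exact no_ideal_family_deg_8_12' k D hkD t r q ht0 hr0 hq0 hrdeg hrirr hqdeg hqirr
    hdvd1 hdvd2 y hy hdeg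
end

section
/- If a triple (t, r, q) of nonzero polynomials in ℚ[x] parameterizes a complete family of pairing-friendly elliptic curves with embedding degree k = 3 and CM discriminant D = 3, then ρ(t, r, q) ≥ 2, i.e., deg q ≥ 2·deg r. -/
open Polynomial

private lemma aux_dvd_bound (t y q r : ℚ[X]) (hqirr : Irreducible q)
    (te : 1 ≤ t.natDegree) (hy : 4 * q = 3 * y ^ 2 + t ^ 2)
    (hd : r ∣ t - y) (hr0 : r ≠ 0) :
    r.natDegree ≤ max t.natDegree y.natDegree := by
  by_cases h0 : t - y = 0
  · exfalso
    have hyt : y = t := (sub_eq_zero.mp h0).symm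
    have h4 : (4 : ℚ[X]) ≠ 0 := by
      intro hc
      have := congrArg (fun p : ℚ[X] => p.coeff 0) hc
      norm_num at this
    have hqt : q = t * t := by
      apply mul_left_cancel₀ h4
      subst hyt
      linear_combination hy
    have hnu : ¬ IsUnit t := not_isUnit_of_natDegree_pos t te
    rcases hqirr.isUnit_or_isUnit hqt with h | h <;> exact hnu h
  · exact le_trans (natDegree_le_of_dvd hd h0) (natDegree_sub_le t y)

/-- A complete family with embedding degree 3 and CM discriminant 3 has `ρ ≥ 2`. -/
theorem rho_ge_two_k3_D3 (t r q : ℚ[X]) (h : IsCompleteFamily 3 3 t r q) :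
    2 * r.natDegree ≤ q.natDegree := by
  obtain ⟨ht0, hr0, hq0, ⟨hrdeg, hrirr, -, -, -⟩, ⟨hqdeg, hqirr, -, -, -⟩,
    hdvd1, hdvd2, y, hy⟩ := h
  -- normalize the CM equation
  have hy' : 4 * q = 3 * y ^ 2 + t ^ 2 := by
    push_cast at hy
    linear_combination -hy
  -- rewrite the cyclotomic divisibility
  have hdvd2' : r ∣ t ^ 2 - t + 1 := by
    have hc : (cyclotomic 3 ℚ).comp (t - 1) = t ^ 2 - t + 1 := by
      rw [cyclotomic_three]
      simp [sub_comp, add_comp, pow_comp, X_comp, one_comp]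
      ring
    rwa [hc] at hdvd2
  -- t is nonconstant
  have hΦ0 : t ^ 2 - t + 1 ≠ 0 := by
    intro hc
    have := congrArg (fun p : ℚ[X] => p.eval 0) hc
    simp only [eval_add, eval_sub, eval_pow, eval_one, eval_zero] at this
    nlinarith [sq_nonneg (2 * t.eval 0 - 1), this]
  have te : 1 ≤ t.natDegree := by
    by_contra hte
    push_neg at hte
    interval_cases htd : t.natDegree
    · have h1 : r.natDegree ≤ (t ^ 2 - t + 1).natDegree :=
        natDegree_le_of_dvd hdvd2' hΦ0
      have h2 : (t ^ 2 - t + 1).natDegree = 0 := by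
        apply Nat.le_zero.mp
        calc (t ^ 2 - t + 1).natDegree
            ≤ max (t ^ 2 - t).natDegree (1 : ℚ[X]).natDegree := natDegree_add_le _ _
          _ ≤ max (max (t ^ 2).natDegree t.natDegree) (1 : ℚ[X]).natDegree := by
              exact max_le_max_right _ (natDegree_sub_le _ _)
          _ ≤ 0 := by simp [natDegree_pow, htd]
      omega
  -- r divides 3 * ((t - y) * (t + y))
  obtain ⟨a, ha⟩ := hdvd1
  obtain ⟨b, hb⟩ := hdvd2'
  have hdvdprod : r ∣ 3 * ((t - y) * (t + y)) :=
    ⟨4 * b - 4 * a, by linear_combination hy' + 4 * hb - 4 * ha⟩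
  have hprime : Prime r := hrirr.prime
  have hmax : r.natDegree ≤ max t.natDegree y.natDegree := by
    rcases hprime.dvd_mul.mp hdvdprod with h3 | hw
    · exfalso
      have h3ne : (3 : ℚ[X]) ≠ 0 := by
        intro hc
        have := congrArg (fun p : ℚ[X] => p.coeff 0) hc
        norm_num at this
      have := natDegree_le_of_dvd h3 h3ne
      have h3d : (3 : ℚ[X]).natDegree = 0 := natDegree_ofNat 3
      omega
    · rcases hprime.dvd_mul.mp hw with h1 | h2
      · exact aux_dvd_bound t y q r hqirr te hy' h1 hr0
      · have hmy : r ∣ t - (-y) := by simpa [sub_neg_eq_add] using h2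
        have := aux_dvd_bound t (-y) q r hqirr te (by linear_combination hy') hmy hr0
        simpa [natDegree_neg] using this
  -- now show natDegree q = 2 * max t.natDegree y.natDegree ≥ 2 * natDegree r
  set m := max (2 * t.natDegree) (2 * y.natDegree) with hm
  have hcoeff : (4 * q).coeff m ≠ 0 := by
    have hce : (4 * q).coeff m = 3 * (y ^ 2).coeff m + (t ^ 2).coeff m := by
      rw [hy']
      simp [coeff_add, coeff_ofNat_mul]
    rw [hce]
    have hyd : (y ^ 2).natDegree = 2 * y.natDegree := by
      rw [natDegree_pow]
    have htd : (t ^ 2).natDegree = 2 * t.natDegree := by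
      rw [natDegree_pow]
    rcases le_or_gt (2 * y.natDegree) (2 * t.natDegree) with hle | hlt
    · have hmeq : m = 2 * t.natDegree := by omega
      have hct : (t ^ 2).coeff m = t.leadingCoeff ^ 2 := by
        rw [hmeq, ← htd]
        show (t ^ 2).coeff (t ^ 2).natDegree = _
        rw [← leadingCoeff, leadingCoeff_pow]
      have hcy : 0 ≤ (y ^ 2).coeff m := by
        rcases lt_or_eq_of_le hle with hlt2 | heq
        · rw [coeff_eq_zero_of_natDegree_lt (by omega)]
        · have : m = (y ^ 2).natDegree := by omega
          rw [this, ← leadingCoeff, leadingCoeff_pow]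
          positivity
      have htl : t.leadingCoeff ≠ 0 := leadingCoeff_ne_zero.mpr ht0
      have : 0 < t.leadingCoeff ^ 2 := by positivity
      nlinarith
    · have hmeq : m = 2 * y.natDegree := by omega
      have hy0 : y ≠ 0 := by
        intro hc
        rw [hc] at hlt
        simp at hlt
      have hcy : (y ^ 2).coeff m = y.leadingCoeff ^ 2 := by
        rw [hmeq, ← hyd]
        show (y ^ 2).coeff (y ^ 2).natDegree = _
        rw [← leadingCoeff, leadingCoeff_pow]
      have hct : (t ^ 2).coeff m = 0 := coeff_eq_zero_of_natDegree_lt (by omega)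
      have hyl : y.leadingCoeff ≠ 0 := leadingCoeff_ne_zero.mpr hy0
      have : 0 < y.leadingCoeff ^ 2 := by positivity
      nlinarith
  have hq4deg : m ≤ (4 * q).natDegree := le_natDegree_of_ne_zero hcoeff
  have hqd : (4 * q).natDegree = q.natDegree := by
    rw [show (4 : ℚ[X]) = C 4 from (map_ofNat C 4).symm, natDegree_C_mul (by norm_num)]
  omega
end

section
/- If a triple (t, r, q) of nonzero polynomials in ℚ[x] parameterizes a complete family of pairing-friendly elliptic curves with embedding degree k = 6 and CM discriminant D = 3, then ρ(t, r, q) ≥ 2, i.e., deg q ≥ 2·deg r. -/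
/-!
With `D = 3`, the identity `(3y - t)(3y + t) = 12 (q + 1 - t) - 4 Φ₆(t - 1)` shows that the prime `r`
divides `3y ∓ t`. Since `4q = t² + 3y²` is a sum of squares with positive weights, no leading terms
cancel, so `deg q = 2 max (deg t, deg y) ≥ 2 deg (3y ∓ t) ≥ 2 deg r`. In the degenerate case
`3y = ±t` the polynomial `q = 3y²` would be a unit times a square, contradicting irreducibility.
-/

open Polynomial

theorem cyclotomic_six_comp_sub_one {R : Type*} [CommRing R] (t : R[X]) :
    (cyclotomic 6 R).comp (t - 1) = t ^ 2 - 3 * t + 3 := by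
  simp only [cyclotomic_six, sub_comp, add_comp, pow_comp, X_comp, one_comp]
  ring

theorem dvd_three_mul_sub_mul_three_mul_add {R : Type*} [CommRing R] {t r q y : R}
    (hr_order : r ∣ q + 1 - t) (hr_embed : r ∣ t ^ 2 - 3 * t + 3)
    (hy : 3 * y ^ 2 = 4 * q - t ^ 2) : r ∣ (3 * y - t) * (3 * y + t) := by
  have key : (3 * y - t) * (3 * y + t) = 12 * (q + 1 - t) - 4 * (t ^ 2 - 3 * t + 3) := by
    linear_combination 3 * hy
  rw [key]
  exact dvd_sub (hr_order.mul_left 12) (hr_embed.mul_left 4)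

section OrderedField

variable {R : Type*} [Field R] [LinearOrder R] [IsStrictOrderedRing R]

theorem natDegree_sq_add_C_mul_sq {c : R} (hc : 0 < c) (a b : R[X]) :
    (a ^ 2 + C c * b ^ 2).natDegree = 2 * max a.natDegree b.natDegree := by
  rcases eq_or_ne a 0 with rfl | ha
  · simp [natDegree_C_mul hc.ne']
  rcases eq_or_ne b 0 with rfl | hb
  · simp
  have hlc : (a ^ 2).leadingCoeff + (C c * b ^ 2).leadingCoeff ≠ 0 := by
    simp only [leadingCoeff_pow, leadingCoeff_mul, leadingCoeff_C]
    have := leadingCoeff_ne_zero.2 ha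
    positivity
  apply natDegree_eq_of_degree_eq_some
  rw [degree_add_eq_of_leadingCoeff_add_ne_zero hlc, degree_C_mul hc.ne', degree_pow, degree_pow,
    degree_eq_natDegree ha, degree_eq_natDegree hb, ← Nat.mul_max_mul_left]
  simp only [nsmul_eq_mul]
  norm_cast

theorem two_mul_natDegree_le_of_dvd_three_mul_sub {t r q y : R[X]} (hq : Irreducible q)
    (hy : 3 * y ^ 2 = 4 * q - t ^ 2) (hr : r ∣ 3 * y - t) :
    2 * r.natDegree ≤ q.natDegree := by
  have hq_deg : q.natDegree = 2 * max t.natDegree y.natDegree := by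
    rw [← natDegree_sq_add_C_mul_sq (three_pos : (0 : R) < 3),
      ← natDegree_C_mul (a := (4 : R)) four_ne_zero]
    congr 1
    simp only [map_ofNat]
    linear_combination -hy
  rcases eq_or_ne (3 * y - t) 0 with hzero | hne
  · have hq_sq : q = y ^ 2 * 3 :=
      mul_left_cancel₀ (by norm_num : (4 : R[X]) ≠ 0) (by linear_combination -hy - (3 * y + t) * hzero)
    have h3 : IsUnit (3 : R[X]) := by
      rw [← C_ofNat]; exact (Ne.isUnit three_ne_zero).map C
    rw [hq_sq, irreducible_mul_isUnit h3] at hq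
    exact absurd hq (not_irreducible_pow (by norm_num))
  · have h3y_deg : (3 * y).natDegree ≤ y.natDegree := by
      rw [← C_ofNat, natDegree_C_mul three_ne_zero]
    have hr_deg := (natDegree_le_of_dvd hr hne).trans (natDegree_sub_le _ _)
    omega

end OrderedField

/-- A complete family with embedding degree 6 and CM discriminant 3 has `ρ ≥ 2`. -/
theorem rho_ge_two_k6_D3 (t r q : ℚ[X]) (h : IsCompleteFamily 6 3 t r q) :
    2 * r.natDegree ≤ q.natDegree := by
  obtain ⟨-, -, -, hr, hq, hr_order, hr_embed, y, hy⟩ := h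
  replace hy : 3 * y ^ 2 = 4 * q - t ^ 2 := by exact_mod_cast hy
  rw [cyclotomic_six_comp_sub_one] at hr_embed
  rcases hr.2.1.prime.dvd_or_dvd (dvd_three_mul_sub_mul_three_mul_add hr_order hr_embed hy)
    with hr_sub | hr_add
  · exact two_mul_natDegree_le_of_dvd_three_mul_sub hq.2.1 hy hr_sub
  · rw [← sub_neg_eq_add] at hr_add
    rw [← neg_sq t] at hy
    exact two_mul_natDegree_le_of_dvd_three_mul_sub hq.2.1 hy hr_add
end

section
/- Let D be a squarefree positive integer with D ≠ 3 (equivalently, √−D ∉ ℚ(ζ_3)). If a triple (t, r, q) of nonzero polynomials in ℚ[x] parameterizes a complete family of pairing-friendly elliptic curves with embedding degree k = 3 and CM discriminant D, then ρ(t, r, q) ≠ 1, i.e., deg q ≠ deg r. -/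
open Polynomial

lemma exists_int_of_sq_int (w : ℚ) (N : ℤ) (h : w ^ 2 = (N : ℚ)) :
    ∃ z : ℤ, (z : ℚ) = w ∧ z ^ 2 = N := by
  have hint : IsIntegral ℤ w := by
    refine ⟨X ^ 2 - C N, monic_X_pow_sub_C N (by norm_num), ?_⟩
    rw [eval₂_sub, eval₂_X_pow, eval₂_C]
    simp [h]
  obtain ⟨z, hz⟩ := IsIntegrallyClosed.isIntegral_iff.mp hint
  have hz' : (z : ℚ) = w := by simpa using hz
  refine ⟨z, hz', ?_⟩
  have : ((z ^ 2 : ℤ) : ℚ) = (N : ℚ) := by push_cast [hz']; exact h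
  exact_mod_cast this

lemma sq_combo (d : ℚ) (hd : 0 < d) (A B : ℚ[X]) (hA : A ≠ 0) (hB : B ≠ 0) :
    (C d * A ^ 2 + B ^ 2).natDegree = 2 * max A.natDegree B.natDegree := by
  have hA2 : (A ^ 2).natDegree = 2 * A.natDegree := natDegree_pow A 2
  have hB2 : (B ^ 2).natDegree = 2 * B.natDegree := natDegree_pow B 2
  have hCd : (C d * A ^ 2).natDegree = 2 * A.natDegree := by
    rw [natDegree_C_mul (ne_of_gt hd), hA2]
  have hlcA : A.leadingCoeff ≠ 0 := leadingCoeff_ne_zero.2 hA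
  have hlcB : B.leadingCoeff ≠ 0 := leadingCoeff_ne_zero.2 hB
  have hbound : (C d * A ^ 2 + B ^ 2).natDegree ≤ 2 * max A.natDegree B.natDegree := by
    refine le_trans (natDegree_add_le _ _) ?_
    rw [hCd, hB2]
    exact max_le (by omega) (by omega)
  have hcoeff : 0 < (C d * A ^ 2 + B ^ 2).coeff (2 * max A.natDegree B.natDegree) := by
    rw [coeff_add, coeff_C_mul]
    rcases lt_trichotomy A.natDegree B.natDegree with hlt | heq | hgt
    · have hm : max A.natDegree B.natDegree = B.natDegree := max_eq_right hlt.le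
      rw [hm]
      have h1 : (A ^ 2).coeff (2 * B.natDegree) = 0 :=
        coeff_eq_zero_of_natDegree_lt (by omega)
      have h2 : (B ^ 2).coeff (2 * B.natDegree) = B.leadingCoeff ^ 2 := by
        rw [← hB2, coeff_natDegree, leadingCoeff_pow]
      rw [h1, h2, mul_zero, zero_add]
      exact sq_pos_of_ne_zero hlcB
    · have hm : max A.natDegree B.natDegree = B.natDegree := max_eq_right heq.le
      rw [hm]
      have h1 : (A ^ 2).coeff (2 * B.natDegree) = A.leadingCoeff ^ 2 := by
        rw [show 2 * B.natDegree = (A ^ 2).natDegree by omega, coeff_natDegree, leadingCoeff_pow]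
      have h2 : (B ^ 2).coeff (2 * B.natDegree) = B.leadingCoeff ^ 2 := by
        rw [← hB2, coeff_natDegree, leadingCoeff_pow]
      rw [h1, h2]
      have := sq_pos_of_ne_zero hlcA
      have := sq_pos_of_ne_zero hlcB
      nlinarith
    · have hm : max A.natDegree B.natDegree = A.natDegree := max_eq_left hgt.le
      rw [hm]
      have h1 : (A ^ 2).coeff (2 * A.natDegree) = A.leadingCoeff ^ 2 := by
        rw [← hA2, coeff_natDegree, leadingCoeff_pow]
      have h2 : (B ^ 2).coeff (2 * A.natDegree) = 0 :=
        coeff_eq_zero_of_natDegree_lt (by omega)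
      rw [h1, h2, add_zero]
      exact mul_pos hd (sq_pos_of_ne_zero hlcA)
  exact le_antisymm hbound (le_natDegree_of_ne_zero (ne_of_gt hcoeff))

/-- No ideal complete family with embedding degree 3 when `√-D ∉ ℚ(ζ_3)`, i.e. `D ≠ 3`. -/
theorem no_ideal_family_k3 (D : ℕ) (hD : Squarefree D) (hDpos : 0 < D) (hD3 : D ≠ 3)
    (t r q : ℚ[X]) (h : IsCompleteFamily 3 D t r q) :
    q.natDegree ≠ r.natDegree := by
  intro hne
  obtain ⟨ht0, hr0, hq0, hRr, hRq, hdiv1, hdiv2, y, hy⟩ := h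
  obtain ⟨hrdeg, hrirr, hrlc, hrint, hrpr⟩ := hRr
  obtain ⟨hqdeg, hqirr, hqlc, hqint, hqpr⟩ := hRq
  have hD0 : (0:ℚ) < (D:ℚ) := by exact_mod_cast hDpos
  have hDne : (D:ℚ) ≠ 0 := ne_of_gt hD0
  have hC4 : (4:ℚ[X]) = C (4:ℚ) := (map_ofNat C 4).symm
  have hC2 : (2:ℚ[X]) = C (2:ℚ) := (map_ofNat C 2).symm
  have htlc : t.leadingCoeff ≠ 0 := leadingCoeff_ne_zero.2 ht0
  -- (iv) concretely
  have hΦ : (cyclotomic 3 ℚ).comp (t - 1) = t ^ 2 - t + 1 := by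
    rw [cyclotomic_three]
    simp only [add_comp, pow_comp, X_comp, one_comp]
    ring
  have hrt : r ∣ t ^ 2 - t + 1 := by rw [← hΦ]; exact hdiv2
  have hB : t ^ 2 - t + 1 ≠ 0 := by
    intro h0
    have h1 := congrArg (eval 0) h0
    simp only [eval_add, eval_sub, eval_pow, eval_zero, eval_one] at h1
    nlinarith [sq_nonneg (2 * t.eval 0 - 1)]
  have hbound21 : (t ^ 2 - t + 1).natDegree ≤ 2 * t.natDegree := by
    refine le_trans (natDegree_add_le _ _) (max_le (le_trans (natDegree_sub_le _ _) ?_) ?_)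
    · exact max_le (by rw [natDegree_pow]) (by omega)
    · simp
  have htdeg : 0 < t.natDegree := by
    by_contra hc
    have : r.natDegree ≤ (t ^ 2 - t + 1).natDegree := natDegree_le_of_dvd hrt hB
    omega
  -- y ≠ 0
  have hy0 : y ≠ 0 := by
    intro hy00
    rw [hy00] at hy
    have hq4 : t ^ 2 = 4 * q := by linear_combination hy
    have hdvd : q ∣ t * t := ⟨4, by linear_combination hq4⟩
    have hqprime : Prime q := hqirr.prime
    have hqt : q ∣ t := by
      rcases hqprime.2.2 t t hdvd with h' | h' <;> exact h'
    have h1 : q.natDegree ≤ t.natDegree := natDegree_le_of_dvd hqt ht0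
    have h2 : (t ^ 2).natDegree = (4 * q).natDegree := by rw [hq4]
    rw [natDegree_pow, hC4, natDegree_C_mul (by norm_num : (4:ℚ) ≠ 0)] at h2
    omega
  have hylc : y.leadingCoeff ≠ 0 := leadingCoeff_ne_zero.2 hy0
  -- deg t ≤ deg q
  have hE : t.natDegree ≤ q.natDegree := by
    by_contra hc
    push_neg at hc
    have hc1 : (4 * q - t ^ 2).coeff (2 * t.natDegree) = -(t.leadingCoeff ^ 2) := by
      rw [coeff_sub, hC4, coeff_C_mul,
        coeff_eq_zero_of_natDegree_lt (by omega : q.natDegree < 2 * t.natDegree), mul_zero,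
        show 2 * t.natDegree = (t ^ 2).natDegree from (natDegree_pow t 2).symm,
        coeff_natDegree, leadingCoeff_pow]
      ring
    have hc2 : ((D:ℚ[X]) * y ^ 2).coeff (2 * t.natDegree)
        = (D:ℚ) * (y ^ 2).coeff (2 * t.natDegree) := by
      rw [← C_eq_natCast, coeff_C_mul]
    have hceq : (D:ℚ) * (y ^ 2).coeff (2 * t.natDegree) = -(t.leadingCoeff ^ 2) := by
      rw [← hc2, hy, hc1]
    have hyN : (y ^ 2).coeff (2 * t.natDegree) ≠ 0 := by
      intro h0
      rw [h0, mul_zero] at hceq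
      have := sq_pos_of_ne_zero htlc
      linarith
    have hle : 2 * t.natDegree ≤ (y ^ 2).natDegree := le_natDegree_of_ne_zero hyN
    have hup : ((D:ℚ[X]) * y ^ 2).natDegree ≤ 2 * t.natDegree := by
      rw [hy]
      refine le_trans (natDegree_sub_le _ _) (max_le ?_ (by rw [natDegree_pow]))
      rw [hC4, natDegree_C_mul (by norm_num : (4:ℚ) ≠ 0)]
      omega
    have hDy : ((D:ℚ[X]) * y ^ 2).natDegree = (y ^ 2).natDegree := by
      rw [← C_eq_natCast, natDegree_C_mul hDne]
    have hyN2 : (y ^ 2).natDegree = 2 * t.natDegree := by omega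
    rw [show 2 * t.natDegree = (y ^ 2).natDegree from hyN2.symm, coeff_natDegree,
      leadingCoeff_pow] at hceq
    have h1 : 0 < (D:ℚ) * y.leadingCoeff ^ 2 := mul_pos hD0 (sq_pos_of_ne_zero hylc)
    have h2 : 0 < t.leadingCoeff ^ 2 := sq_pos_of_ne_zero htlc
    linarith
  -- q + 1 - t ≠ 0
  have hF : q + 1 - t ≠ 0 := by
    intro h0
    have htq : t = q + 1 := by linear_combination -h0
    have hq1 : ∀ x : ℚ, q.eval x = 1 := by
      intro x
      have h1 := congrArg (eval x) hy
      rw [htq] at h1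
      simp only [eval_mul, eval_pow, eval_sub, eval_add, eval_one, eval_natCast,
        eval_ofNat] at h1
      have hle : (q.eval x - 1) ^ 2 ≤ 0 := by
        nlinarith [mul_nonneg hD0.le (sq_nonneg (y.eval x))]
      have h2 : (q.eval x - 1) ^ 2 = 0 := le_antisymm hle (sq_nonneg _)
      have h3 : q.eval x - 1 = 0 := by
        exact pow_eq_zero_iff (two_ne_zero) |>.mp h2
      linarith
    have : q = 1 := Polynomial.funext (fun x => by rw [hq1 x, eval_one])
    rw [this, natDegree_one] at hqdeg
    omega
  -- extract the constant c with q + 1 - t = r * C c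
  obtain ⟨k, hk⟩ := hdiv1
  have hk0 : k ≠ 0 := by rintro rfl; rw [mul_zero] at hk; exact hF hk
  have hdegqt : (q + 1 - t).natDegree ≤ r.natDegree := by
    refine le_trans (natDegree_sub_le _ _) (max_le (le_trans (natDegree_add_le _ _) ?_) ?_)
    · rw [natDegree_one]; omega
    · omega
  have hkdeg : k.natDegree = 0 := by
    have h5 := natDegree_mul hr0 hk0
    rw [← hk] at h5
    omega
  obtain ⟨c, hc⟩ : ∃ c, k = C c := ⟨k.coeff 0, eq_C_of_natDegree_eq_zero hkdeg⟩
  have hc0 : c ≠ 0 := by rintro rfl; rw [C_0] at hc; exact hk0 hc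
  rw [hc] at hk
  -- the key degree identity
  have hI : C (D:ℚ) * y ^ 2 + (t - 2) ^ 2 = r * (C c * 4) := by
    rw [C_eq_natCast]
    linear_combination hy + 4 * hk
  have hdt2 : (t - 2).natDegree = t.natDegree := by
    rw [hC2, natDegree_sub_C]
  have ht2 : t - 2 ≠ 0 := by
    intro h0
    rw [h0, natDegree_zero] at hdt2
    omega
  have hCc4 : C c * 4 = C (c * 4) := by rw [hC4, ← C_mul]
  have hImax : 2 * max y.natDegree (t - 2).natDegree = r.natDegree := by
    rw [← sq_combo (D:ℚ) hD0 y (t - 2) hy0 ht2, hI, hCc4,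
      natDegree_mul hr0 (by simpa using mul_ne_zero hc0 (by norm_num : (4:ℚ) ≠ 0)),
      natDegree_C]
    omega
  have hrle : r.natDegree ≤ 2 * t.natDegree := le_trans (natDegree_le_of_dvd hrt hB) hbound21
  have hr2t : r.natDegree = 2 * t.natDegree := by
    rw [hdt2] at hImax
    have hmx := le_max_right y.natDegree t.natDegree
    have hmx2 : max y.natDegree t.natDegree ≤ t.natDegree := by omega
    have : max y.natDegree t.natDegree = t.natDegree := le_antisymm hmx2 hmx
    omega
  -- extract the constant s with t² - t + 1 = r * C s
  obtain ⟨k2, hk2⟩ := hrt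
  have hk20 : k2 ≠ 0 := by rintro rfl; rw [mul_zero] at hk2; exact hB hk2
  have hk2deg : k2.natDegree = 0 := by
    have h5 := natDegree_mul hr0 hk20
    rw [← hk2] at h5
    omega
  obtain ⟨s, hs⟩ : ∃ s, k2 = C s := ⟨k2.coeff 0, eq_C_of_natDegree_eq_zero hk2deg⟩
  have hs0 : s ≠ 0 := by rintro rfl; rw [C_0] at hs; exact hk20 hs
  rw [hs] at hk2
  -- the key identity D y² = r C(4c - s) + 3t - 3
  have hCsplit : C (4 * c - s) = C c * 4 - C s := by
    rw [C_sub, C_mul, show C (4:ℚ) = (4:ℚ[X]) from hC4.symm]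
    ring
  have hK : (D:ℚ[X]) * y ^ 2 = r * C (4 * c - s) + 3 * t - 3 := by
    linear_combination hy + 4 * hk - hk2 - r * hCsplit
  set β : ℚ := 4 * c - s with hβ
  rcases eq_or_ne β 0 with hβ0 | hβ0
  · -- case β = 0 : 4q = t² + 3t - 3 never yields integer values
    have hs4c : s = 4 * c := by
      have : 4 * c - s = 0 := hβ ▸ hβ0
      linarith
    have hCs : C s = C c * 4 := by
      rw [hs4c, C_mul, show C (4:ℚ) = (4:ℚ[X]) from hC4.symm]
      ring
    have h4q : 4 * q = t ^ 2 + 3 * t - 3 := by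
      linear_combination 4 * hk - hk2 - r * hCs
    obtain ⟨a, n0, han⟩ := hqint
    have hw : (2 * t.eval (a:ℚ) + 3) ^ 2 = ((16 * n0 + 21 : ℤ) : ℚ) := by
      have h1 := congrArg (eval (a:ℚ)) h4q
      simp only [eval_mul, eval_add, eval_sub, eval_pow, eval_ofNat, han] at h1
      push_cast
      linear_combination (-4) * h1
    obtain ⟨z, hz1, hz2⟩ := exists_int_of_sq_int _ _ hw
    rcases Int.even_or_odd z with ⟨m, hm⟩ | ⟨m, hm⟩
    · have h6 : 4 * (m * m) = 16 * n0 + 21 := by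
        rw [hm] at hz2
        linear_combination hz2
      omega
    · have h6 : 4 * (m * (m + 1)) + 1 = 16 * n0 + 21 := by
        rw [hm] at hz2
        linear_combination hz2
      obtain ⟨j, hj⟩ := Int.even_mul_succ_self m
      rw [hj] at h6
      omega
  rcases eq_or_ne β (3 * s) with hβ3 | hβ3
  · -- case β = 3s : q = t², contradicting irreducibility
    have hcs : c = s := by
      have : 4 * c - s = 3 * s := hβ ▸ hβ3
      linarith
    have hCc : C c = C s := by rw [hcs]
    have h4q : (4:ℚ[X]) * q = 4 * (t * t) := by
      linear_combination 4 * hk - 4 * hk2 + (4 * r) * hCc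
    have h40 : (4:ℚ[X]) ≠ 0 := by
      rw [hC4]
      simpa using (by norm_num : (4:ℚ) ≠ 0)
    have hqt : q = t * t := mul_left_cancel₀ h40 h4q
    rcases hqirr.isUnit_or_isUnit hqt with hu | hu <;>
      · have := natDegree_eq_zero_of_isUnit hu
        omega
  · -- Pell case
    have hKs : C s * ((D:ℚ[X]) * y ^ 2) = C β * (t ^ 2 - t + 1) + C s * (3 * t - 3) := by
      linear_combination C s * hK - C β * hk2
    set v : ℚ[X] := C (2 * β) * t + C (3 * s - β) with hv
    have e1 : C (4 * β * s * (D:ℚ)) = 4 * C β * C s * (D:ℚ[X]) := by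
      rw [← C_eq_natCast]
      rw [C_mul, C_mul, C_mul, show C (4:ℚ) = (4:ℚ[X]) from hC4.symm]
    have e2 : C (3 * (3 * s - β) * (β + s)) = 3 * (3 * C s - C β) * (C β + C s) := by
      rw [C_mul, C_mul, C_sub, C_add, C_mul,
        show C (3:ℚ) = (3:ℚ[X]) from (map_ofNat C 3).symm]
    have e3 : C (2 * β) = 2 * C β := by
      rw [C_mul, show C (2:ℚ) = (2:ℚ[X]) from hC2.symm]
    have e4 : C (3 * s - β) = 3 * C s - C β := by
      rw [C_sub, C_mul, show C (3:ℚ) = (3:ℚ[X]) from (map_ofNat C 3).symm]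
    have hPell : v ^ 2 = C (4 * β * s * (D:ℚ)) * y ^ 2 + C (3 * (3 * s - β) * (β + s)) := by
      rw [hv, e1, e2, e3, e4]
      linear_combination (-(4 * C β)) * hKs
    set g : ℚ := 4 * β * s * (D:ℚ) with hg
    have hg0 : g ≠ 0 := by
      apply mul_ne_zero (mul_ne_zero (mul_ne_zero (by norm_num) hβ0) hs0) hDne
    set E : ℚ := 3 * (3 * s - β) * (β + s) with hEdef
    have hE0 : E ≠ 0 := by
      have h1 : 3 * s - β ≠ 0 := by
        intro h0
        apply hβ3
        linarith
      have h2 : β + s ≠ 0 := by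
        intro h0
        apply hc0
        have : 4 * c - s + s = 0 := by rw [← hβ]; exact h0
        linarith
      exact mul_ne_zero (mul_ne_zero (by norm_num) h1) h2
    have h2β : (2:ℚ) * β ≠ 0 := mul_ne_zero two_ne_zero hβ0
    have hvdeg : v.natDegree = t.natDegree := by
      rw [hv, natDegree_add_C, natDegree_C_mul h2β]
    have hvlc : v.leadingCoeff = 2 * β * t.leadingCoeff := by
      rw [leadingCoeff, hvdeg, hv, coeff_add, coeff_C_mul, coeff_C,
        if_neg (by omega : ¬ t.natDegree = 0), coeff_natDegree, add_zero]
    have hv0 : v ≠ 0 := by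
      intro h0
      rw [h0, natDegree_zero] at hvdeg
      omega
    have hvd2 : (v ^ 2).natDegree = 2 * t.natDegree := by rw [natDegree_pow, hvdeg]
    have hydeg : y.natDegree = t.natDegree := by
      rcases lt_trichotomy y.natDegree t.natDegree with hlt | he | hgt
      · exfalso
        have hb : (C g * y ^ 2 + C E).natDegree ≤ 2 * y.natDegree := by
          refine le_trans (natDegree_add_le _ _) (max_le ?_ ?_)
          · rw [natDegree_C_mul hg0, natDegree_pow]
          · rw [natDegree_C]
            omega
        rw [← hPell, hvd2] at hb
        omega
      · exact he
      · exfalso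
        have hc1 : (v ^ 2).coeff (2 * y.natDegree) = 0 :=
          coeff_eq_zero_of_natDegree_lt (by omega)
        have hc2 : (C g * y ^ 2 + C E).coeff (2 * y.natDegree)
            = g * y.leadingCoeff ^ 2 := by
          rw [coeff_add, coeff_C_mul,
            show 2 * y.natDegree = (y ^ 2).natDegree from (natDegree_pow y 2).symm,
            coeff_natDegree, leadingCoeff_pow, coeff_C,
            if_neg (by rw [natDegree_pow]; omega : ¬ (y ^ 2).natDegree = 0), add_zero]
        rw [hPell, hc2] at hc1
        exact (mul_ne_zero hg0 (sq_pos_of_ne_zero hylc).ne') hc1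
    have hlhs : (v ^ 2).coeff (2 * t.natDegree) = (2 * β * t.leadingCoeff) ^ 2 := by
      rw [show 2 * t.natDegree = (v ^ 2).natDegree from hvd2.symm, coeff_natDegree,
        leadingCoeff_pow, hvlc]
    have hrhs : (C g * y ^ 2 + C E).coeff (2 * t.natDegree) = g * y.leadingCoeff ^ 2 := by
      rw [coeff_add, coeff_C_mul, coeff_C, if_neg (by omega : ¬ 2 * t.natDegree = 0),
        add_zero, show 2 * t.natDegree = (y ^ 2).natDegree by rw [natDegree_pow, hydeg],
        coeff_natDegree, leadingCoeff_pow]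
    have hlceq : (2 * β * t.leadingCoeff) ^ 2 = g * y.leadingCoeff ^ 2 := by
      rw [← hlhs, ← hrhs, hPell]
    set hq' : ℚ := 2 * β * t.leadingCoeff / y.leadingCoeff with hq'def
    have hh2 : hq' * hq' = g := by
      rw [hq'def]
      field_simp
      linear_combination hlceq
    have hCg : C g = C hq' * C hq' := by rw [← C_mul, hh2]
    have hprod : (v - C hq' * y) * (v + C hq' * y) = C E := by
      linear_combination hPell + y ^ 2 * hCg
    have hCE0 : (C E : ℚ[X]) ≠ 0 := by simpa using hE0
    have hne1 : v - C hq' * y ≠ 0 := by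
      intro h0
      rw [h0, zero_mul] at hprod
      exact hCE0 hprod.symm
    have hne2 : v + C hq' * y ≠ 0 := by
      intro h0
      rw [h0, mul_zero] at hprod
      exact hCE0 hprod.symm
    have hdegs := natDegree_mul hne1 hne2
    rw [hprod, natDegree_C] at hdegs
    have hd1 : (v - C hq' * y).natDegree = 0 := by omega
    have hd2 : (v + C hq' * y).natDegree = 0 := by omega
    have e1def := eq_C_of_natDegree_eq_zero hd1
    have e2def := eq_C_of_natDegree_eq_zero hd2
    have h2v : (2:ℚ[X]) * v
        = C ((v - C hq' * y).coeff 0) + C ((v + C hq' * y).coeff 0) := by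
      linear_combination e1def + e2def
    have hL : ((2:ℚ[X]) * v).natDegree = t.natDegree := by
      rw [hC2, natDegree_C_mul (two_ne_zero), hvdeg]
    have hR : (C ((v - C hq' * y).coeff 0) + C ((v + C hq' * y).coeff 0)).natDegree = 0 := by
      rw [← C_add, natDegree_C]
    rw [h2v, hR] at hL
    omega
end

section
/- Let D be a squarefree positive integer with D ≠ 1 (equivalently, √−D ∉ ℚ(ζ_4)). If a triple (t, r, q) of nonzero polynomials in ℚ[x] parameterizes a complete family of pairing-friendly elliptic curves with embedding degree k = 4 and CM discriminant D, then ρ(t, r, q) ≠ 1, i.e., deg q ≠ deg r. -/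
open Polynomial

/-! Put `u = t - 1`, so that `r ∣ Φ₄(u) = u² + 1`. As `4q = D y² + t²` is a sum of squares,
`deg q ≥ 2 deg t ≥ deg (u² + 1)`; so if `deg q = deg r`, then `u² + 1 = c' r` and
`q + 1 - t = c r` for constants `c, c'`. Eliminating `q` and `r` gives
`c' D y² = b (u² + 1) + 2 c' u` with `b = 4c - c'`; multiplied by `b`, this reads
`b c' D y² - (b u + c')² = b² - c'²`. For `b² ≠ c'²` this polynomial Pell equation forces
`b u + c'` to be constant (differentiate and use coprimality of `y` and `b u + c'`); for
`b = ±c' ≠ 0`, comparing leading coefficients makes `D` a rational square, so `D = 1`. In the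
remaining case `b = 0` we get `4q = (t + 1)² - 3`, which takes no integer value because no square
is `3 mod 4`. -/

lemma cyclotomic_four_comp {R : Type*} [CommRing R] (p : R[X]) :
    (cyclotomic 4 R).comp p = p ^ 2 + 1 := by
  rw [show 4 = 2 ^ (1 + 1) from rfl, cyclotomic_prime_pow_eq_geom_sum Nat.prime_two]
  simp [Finset.sum_range_succ, add_comm]

lemma two_mul_natDegree_le_natDegree_C_mul_sq_add_sq {K : Type*} [Field K] [LinearOrder K]
    [IsStrictOrderedRing K] {a : K} (ha : 0 ≤ a) (y t : K[X]) :
    2 * t.natDegree ≤ (C a * y ^ 2 + t ^ 2).natDegree := by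
  rcases eq_or_ne t 0 with rfl | ht
  · simp
  have hlc : (C a * y ^ 2).leadingCoeff + (t ^ 2).leadingCoeff ≠ 0 := by
    rw [leadingCoeff_mul, leadingCoeff_C, leadingCoeff_pow, leadingCoeff_pow]
    have := leadingCoeff_ne_zero.mpr ht
    positivity
  rw [← natDegree_pow]
  exact natDegree_le_natDegree
    ((degree_add_eq_of_leadingCoeff_add_ne_zero hlc).symm ▸ le_max_right _ _)

lemma sq_add_one_ne_zero {R : Type*} [CommRing R] [LinearOrder R] [IsStrictOrderedRing R]
    (p : R[X]) : p ^ 2 + 1 ≠ 0 := fun h => by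
  have h0 := congrArg (eval 0) h
  simp only [eval_add, eval_pow, eval_one, eval_zero] at h0
  exact (by positivity : (0 : R) < _).ne' h0

lemma exists_eq_C_mul_of_dvd_of_natDegree_le {R : Type*} [CommSemiring R] [NoZeroDivisors R]
    {p q : R[X]} (h : p ∣ q) (hle : q.natDegree ≤ p.natDegree) : ∃ c, q = C c * p := by
  obtain ⟨s, rfl⟩ := h
  rcases eq_or_ne p 0 with rfl | hp
  · exact ⟨0, by simp⟩
  rcases eq_or_ne s 0 with rfl | hs
  · exact ⟨0, by simp⟩
  rw [natDegree_mul hp hs] at hle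
  exact ⟨s.coeff 0, by rw [mul_comm, ← eq_C_of_natDegree_eq_zero (by omega)]⟩

lemma natDegree_eq_zero_of_C_mul_sq_add_C_mul_sq_eq_C {K : Type*} [Field K] [CharZero K]
    {a b c : K} (ha : a ≠ 0) (hb : b ≠ 0) (hc : c ≠ 0) {y v : K[X]}
    (h : C a * y ^ 2 + C b * v ^ 2 = C c) : v.natDegree = 0 := by
  have hcop : IsCoprime y v := by
    have hinv : C c⁻¹ * C c = 1 := by rw [← C_mul, inv_mul_cancel₀ hc, C_1]
    exact ⟨C c⁻¹ * C a * y, C c⁻¹ * C b * v, by linear_combination C c⁻¹ * h + hinv⟩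
  have hder : C a * (y * derivative y) = -(C b * (v * derivative v)) := by
    have h2 : (2 : K[X]) * (C a * (y * derivative y) + C b * (v * derivative v)) = 0 := by
      have := congrArg derivative h
      simp only [derivative_add, derivative_C_mul, derivative_sq, derivative_C, map_ofNat] at this
      linear_combination this
    linear_combination (mul_eq_zero.mp h2).resolve_left two_ne_zero
  by_contra hv
  have hv' : derivative v ≠ 0 := mt derivative_eq_zero.mp hv
  have hy' : derivative y ≠ 0 := by
    intro hy'
    rw [hy', mul_zero, mul_zero, zero_eq_neg] at hder
    simp only [mul_eq_zero, C_eq_zero, hb, hv', false_or, or_false] at hder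
    simp [hder] at hv
  have hy_dvd : y ∣ derivative v :=
    hcop.dvd_of_dvd_mul_left ((isUnit_C.mpr hb.isUnit).dvd_mul_left.mp
      ⟨-(C a * derivative y), by linear_combination hder⟩)
  have hv_dvd : v ∣ derivative y :=
    hcop.symm.dvd_of_dvd_mul_left ((isUnit_C.mpr ha.isUnit).dvd_mul_left.mp
      ⟨-(C b * derivative v), by linear_combination hder⟩)
  have := natDegree_le_of_dvd hy_dvd hv'
  have := natDegree_le_of_dvd hv_dvd hy'
  have := natDegree_derivative_lt hv
  have := natDegree_derivative_lt (mt derivative_eq_zero.mpr hy')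
  omega

lemma isSquare_of_C_mul_sq_eq_sq {K : Type*} [Field K] {a : K} {y w : K[X]} (hw : w ≠ 0)
    (h : C a * y ^ 2 = w ^ 2) : IsSquare a := by
  have hy : y.leadingCoeff ≠ 0 := by
    rintro hy
    rw [leadingCoeff_eq_zero.mp hy] at h
    exact hw (pow_eq_zero_iff two_ne_zero |>.mp (by simpa using h.symm))
  have hlc := congrArg leadingCoeff h
  rw [leadingCoeff_mul, leadingCoeff_C, leadingCoeff_pow, leadingCoeff_pow] at hlc
  exact ⟨w.leadingCoeff / y.leadingCoeff, by field_simp; linear_combination hlc⟩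

lemma Squarefree.isUnit_of_isSquare {M : Type*} [Monoid M] {n : M} (hn : Squarefree n)
    (hsq : IsSquare n) : IsUnit n := by
  obtain ⟨r, rfl⟩ := hsq
  exact (hn r dvd_rfl).mul (hn r dvd_rfl)

lemma Int.not_isSquare_four_mul_add_three (n : ℤ) : ¬ IsSquare (4 * n + 3) := by
  rintro ⟨r, hr⟩
  have h4 := congrArg (Int.cast : ℤ → ZMod 4) hr
  push_cast at h4
  rw [show (4 : ZMod 4) = 0 from rfl, zero_mul, zero_add] at h4
  generalize (r : ZMod 4) = x at h4
  revert x
  decide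

lemma not_representsIntegers_of_four_mul_eq_sq_sub_three {q s : ℚ[X]} (h : 4 * q = s ^ 2 - 3) :
    ¬ RepresentsIntegers q := by
  rintro ⟨a, n, hn⟩
  have hev := congrArg (eval (a : ℚ)) h
  simp only [eval_mul, eval_sub, eval_pow, eval_ofNat, hn] at hev
  refine Int.not_isSquare_four_mul_add_three n (Rat.isSquare_intCast_iff.mp ⟨s.eval (a : ℚ), ?_⟩)
  push_cast
  linear_combination hev

lemma eq_one_of_C_mul_sq_eq_sq {D : ℕ} (hD : Squarefree D) {b c : ℚ} (hc : c ≠ 0)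
    (hbc : b ^ 2 = c ^ 2) {y w : ℚ[X]} (hw : w ≠ 0) (h : C (b * c * D) * y ^ 2 = w ^ 2) :
    D = 1 := by
  obtain ⟨s, hs⟩ := isSquare_of_C_mul_sq_eq_sq hw h
  rcases sq_eq_sq_iff_eq_or_eq_neg.mp hbc with rfl | rfl
  · have hsq : IsSquare (D : ℚ) := ⟨s / b, by field_simp; linear_combination hs⟩
    exact Nat.isUnit_iff.mp (hD.isUnit_of_isSquare (Rat.isSquare_natCast_iff.mp hsq))
  · have hD0 : (D : ℚ) = 0 := by
      nlinarith [sq_nonneg s, sq_pos_of_ne_zero hc, Nat.cast_nonneg (α := ℚ) D]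
    exact absurd (Nat.cast_eq_zero.mp hD0) hD.ne_zero

lemma eq_zero_of_C_mul_sq_eq_quadratic {D : ℕ} (hD : Squarefree D) (hD1 : D ≠ 1) {b c : ℚ}
    (hc : c ≠ 0) {u y : ℚ[X]} (hu : u.natDegree ≠ 0)
    (h : C (c * D) * y ^ 2 = C b * (u ^ 2 + 1) + C (2 * c) * u) : b = 0 := by
  by_contra hb
  set w := C b * u + C c
  have hw : w.natDegree = u.natDegree := by rw [natDegree_add_C, natDegree_C_mul hb]
  have hw0 : w ≠ 0 := fun h0 => hu (hw ▸ h0 ▸ natDegree_zero)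
  have key : C (b * c * D) * y ^ 2 - w ^ 2 = C (b ^ 2 - c ^ 2) := by
    simp only [w, map_mul, map_sub, map_pow, map_ofNat] at h ⊢
    linear_combination C b * h
  rcases eq_or_ne (b ^ 2 - c ^ 2) 0 with hbc | hbc
  · rw [hbc, C_0] at key
    exact hD1 (eq_one_of_C_mul_sq_eq_sq hD hc (sub_eq_zero.mp hbc) (y := y) hw0
      (by linear_combination key))
  · have hD0 : (D : ℚ) ≠ 0 := Nat.cast_ne_zero.mpr hD.ne_zero
    exact hu (hw ▸ natDegree_eq_zero_of_C_mul_sq_add_C_mul_sq_eq_C (y := y) (v := w)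
      (mul_ne_zero (mul_ne_zero hb hc) hD0) (neg_ne_zero.mpr one_ne_zero) hbc
      (by rw [C_neg, C_1]; linear_combination key))

theorem no_ideal_family_k4_general (D : ℕ) (hD : Squarefree D) (hD1 : D ≠ 1)
    (t r q : ℚ[X]) (h : IsCompleteFamily 4 D t r q) :
    q.natDegree ≠ r.natDegree := by
  intro hqr
  obtain ⟨-, -, -, ⟨hr_pos, -⟩, ⟨-, -, -, hq_int, -⟩, hr_trace, hr_cyc, y, hy⟩ := h
  rw [cyclotomic_four_comp] at hr_cyc
  have hF0 := sq_add_one_ne_zero (t - 1)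
  have hF_deg : ((t - 1) ^ 2 + 1).natDegree ≤ 2 * t.natDegree := by compute_degree
  have hq_deg : 2 * t.natDegree ≤ q.natDegree := by
    have := two_mul_natDegree_le_natDegree_C_mul_sq_add_sq (Nat.cast_nonneg' D) y t
    rwa [C_eq_natCast, hy, sub_add_cancel, ← map_ofNat C, natDegree_C_mul four_ne_zero] at this
  have ht_deg : t.natDegree ≠ 0 := by
    have := natDegree_le_of_dvd hr_cyc hF0
    omega
  obtain ⟨c', hc'⟩ := exists_eq_C_mul_of_dvd_of_natDegree_le hr_cyc (by omega)
  have hc'0 : c' ≠ 0 := fun h0 => hF0 (by simpa [h0] using hc')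
  obtain ⟨c, hc⟩ := exists_eq_C_mul_of_dvd_of_natDegree_le hr_trace (by compute_degree; omega)
  have hb : 4 * c - c' = 0 := by
    refine eq_zero_of_C_mul_sq_eq_quadratic hD hD1 hc'0 (u := t - 1) (y := y) ?_ ?_
    · rwa [natDegree_sub_eq_left_of_natDegree_lt (by rwa [natDegree_one, pos_iff_ne_zero])]
    · simp only [map_mul, map_sub, map_ofNat, map_natCast]
      linear_combination C c' * hy + 4 * C c' * hc - 4 * C c * hc'
  obtain rfl : c' = 4 * c := by linarith
  refine not_representsIntegers_of_four_mul_eq_sq_sub_three (s := t + 1) ?_ hq_int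
  simp only [map_mul, map_ofNat] at hc'
  linear_combination 4 * hc - hc'

/-- No ideal complete family with embedding degree 4 when `√-D ∉ ℚ(ζ_4)`, i.e. `D ≠ 1`. -/
theorem no_ideal_family_k4 (D : ℕ) (hD : Squarefree D) (hDpos : 0 < D) (hD1 : D ≠ 1)
    (t r q : ℚ[X]) (h : IsCompleteFamily 4 D t r q) :
    q.natDegree ≠ r.natDegree :=
  no_ideal_family_k4_general D hD hD1 t r q h
end

section
/- Let D be a squarefree positive integer with D ≠ 3. Suppose (t, r, q) parameterizes a complete family of pairing-friendly elliptic curves with embedding degree k = 3 and CM discriminant D such that r(x) = Φ_3(t(x) − 1) and deg q = deg r (i.e., ρ(t, r, q) = 1). Then every y ∈ ℚ[x] with D·y² = 4q − t² satisfies 2·deg y = deg t. -/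
/-
Since `r = t² - t + 1` has degree `2 deg t = deg q` and divides `q + 1 - t`, the quotient is a
nonzero constant `c`, and the CM equation becomes `D y² = (4c - 1) t² + 4(1 - c) t + 4(c - 1)`.
For `c = 1/4` this reads `D y² = 3 (t - 1)`, which gives `2 deg y = deg t`. For `c = 1` it reads
`D y² = 3 t²`, so `3D` is a square and `D = 3`. Otherwise the quadratic has discriminant
`48 c (1 - c) ≠ 0`, and completing the square gives `S² - a y² = const ≠ 0` with `deg S = deg t`;
over an algebraic closure both factors of `(S - e y) (S + e y)` are then units, so `t` would be
constant.
-/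

open Polynomial

lemma Nat.eq_of_squarefree_of_isSquare_mul_prime {p D : ℕ} (hp : p.Prime) (hD : Squarefree D)
    (h : IsSquare (D * p)) : D = p := by
  obtain ⟨k, hk⟩ := h
  obtain ⟨m, rfl⟩ : p ∣ k := (hp.dvd_mul.mp ⟨D, by rw [← hk, mul_comm]⟩).elim id id
  have hDm : D = p * (m * m) := by
    apply Nat.eq_of_mul_eq_mul_left hp.pos
    linarith
  have hm : m = 1 := Nat.isUnit_iff.mp (hD m ⟨p, by rw [hDm]; ring⟩)
  simpa [hm] using hDm

lemma isSquare_mul_of_mul_sq_eq_mul_sq {K : Type*} [Field K] {a b u v : K} (hb : b ≠ 0)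
    (hv : v ≠ 0) (h : a * u ^ 2 = b * v ^ 2) : IsSquare (a * b) := by
  have hu : u ≠ 0 := by
    rintro rfl
    simp_all
  refine ⟨b * v / u, ?_⟩
  field_simp
  linear_combination h

namespace Polynomial

variable {K : Type*} [Field K]

lemma natDegree_eq_zero_of_sub_mul_add_eq_C {U V : K[X]} {k : K} (h2 : (2 : K) ≠ 0)
    (hk : k ≠ 0) (h : (U - V) * (U + V) = C k) : U.natDegree = 0 := by
  have hunit : IsUnit ((U - V) * (U + V)) := h ▸ isUnit_C.mpr hk.isUnit
  have hsub := natDegree_eq_zero_of_isUnit (isUnit_of_mul_isUnit_left hunit)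
  have hadd := natDegree_eq_zero_of_isUnit (isUnit_of_mul_isUnit_right hunit)
  have h2U : C 2 * U = (U - V) + (U + V) := by
    rw [map_ofNat]
    ring
  rw [← natDegree_C_mul (p := U) h2, h2U]
  exact Nat.le_zero.mp ((natDegree_add_le _ _).trans (by omega))

lemma natDegree_eq_zero_of_sq_sub_C_mul_sq_eq_C {S Y : K[X]} {a k : K} (h2 : (2 : K) ≠ 0)
    (hk : k ≠ 0) (h : S ^ 2 - C a * Y ^ 2 = C k) : S.natDegree = 0 := by
  let φ := algebraMap K (AlgebraicClosure K)
  obtain ⟨e, he⟩ := IsAlgClosed.exists_pow_nat_eq (φ a) two_pos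
  have hfac : (S.map φ - C e * Y.map φ) * (S.map φ + C e * Y.map φ) = C (φ k) := by
    have := congrArg (map φ) h
    simp only [Polynomial.map_sub, Polynomial.map_mul, Polynomial.map_pow, map_C, ← he,
      map_pow] at this
    linear_combination this
  rw [← natDegree_map φ]
  have h2' : (2 : AlgebraicClosure K) ≠ 0 := by
    simpa only [map_ofNat, map_zero] using φ.injective.ne h2
  exact natDegree_eq_zero_of_sub_mul_add_eq_C h2' ((map_ne_zero_iff φ φ.injective).mpr hk) hfac

lemma natDegree_eq_zero_of_C_mul_sq_eq_quadratic {t y : K[X]} {a b c d : K} (h2 : (2 : K) ≠ 0)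
    (ha : a ≠ 0) (hdisc : b ^ 2 - 4 * a * c ≠ 0)
    (h : C d * y ^ 2 = C a * t ^ 2 + C b * t + C c) : t.natDegree = 0 := by
  have hsq : (C (2 * a) * t + C b) ^ 2 - C (4 * a * d) * y ^ 2 = C (b ^ 2 - 4 * a * c) := by
    simp only [map_mul, map_sub, map_pow, map_ofNat]
    linear_combination (-4 * C a) * h
  have := natDegree_eq_zero_of_sq_sub_C_mul_sq_eq_C h2 hdisc hsq
  rwa [natDegree_add_C, natDegree_C_mul (mul_ne_zero h2 ha)] at this

lemma two_mul_natDegree_eq_of_C_mul_sq_eq_linear {t y : K[X]} {a b d : K} (hd : d ≠ 0)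
    (ha : a ≠ 0) (h : C d * y ^ 2 = C a * t + C b) : 2 * y.natDegree = t.natDegree := by
  have := congrArg natDegree h
  rwa [natDegree_C_mul hd, natDegree_pow, natDegree_add_C, natDegree_C_mul ha] at this

lemma exists_eq_C_mul_of_dvd_of_natDegree_le {f g : K[X]} (hg : g ≠ 0) (hdvd : g ∣ f)
    (hle : f.natDegree ≤ g.natDegree) : ∃ c, f = C c * g := by
  obtain ⟨H, rfl⟩ := hdvd
  rcases eq_or_ne H 0 with rfl | hH
  · exact ⟨0, by simp⟩
  rw [natDegree_mul hg hH] at hle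
  exact ⟨H.coeff 0, by rw [mul_comm, ← eq_C_of_natDegree_eq_zero (by omega)]⟩

lemma cyclotomic_three_comp_sub_one {R : Type*} [CommRing R] (t : R[X]) :
    (cyclotomic 3 R).comp (t - 1) = t ^ 2 - t + 1 := by
  rw [cyclotomic_three]
  simp only [add_comp, pow_comp, X_comp, one_comp]
  ring

lemma eq_of_C_mul_sq_eq_C_prime_mul_sq {p D : ℕ} (hp : p.Prime) (hD : Squarefree D)
    {t y : ℚ[X]} (ht : t ≠ 0) (h : C (D : ℚ) * y ^ 2 = C (p : ℚ) * t ^ 2) : D = p := by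
  have hlc := congrArg leadingCoeff h
  simp only [leadingCoeff_mul, leadingCoeff_C, leadingCoeff_pow] at hlc
  have hsq := isSquare_mul_of_mul_sq_eq_mul_sq (by exact_mod_cast hp.ne_zero)
    (leadingCoeff_ne_zero.mpr ht) hlc
  exact Nat.eq_of_squarefree_of_isSquare_mul_prime hp hD
    (Rat.isSquare_natCast_iff.mp (by exact_mod_cast hsq))

end Polynomial

lemma two_mul_natDegree_eq_of_cm_equation {D : ℕ} (hD : Squarefree D) (hD3 : D ≠ 3)
    {t y : ℚ[X]} {c : ℚ} (ht : 0 < t.natDegree) (hc : c ≠ 0)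
    (h : C (D : ℚ) * y ^ 2 = C (4 * c - 1) * t ^ 2 + C (4 - 4 * c) * t + C (4 * c - 4)) :
    2 * y.natDegree = t.natDegree := by
  by_cases hc4 : c = 1 / 4
  · subst hc4
    refine two_mul_natDegree_eq_of_C_mul_sq_eq_linear (a := 3) (b := -3) (d := (D : ℚ))
      (by exact_mod_cast hD.ne_zero) (by norm_num) ?_
    rw [h]
    norm_num
  by_cases hc1 : c = 1
  · subst hc1
    refine absurd (eq_of_C_mul_sq_eq_C_prime_mul_sq Nat.prime_three hD (y := y)
      (ne_zero_of_natDegree_gt ht) ?_) hD3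
    rw [h]
    norm_num
  have hdisc : (4 - 4 * c) ^ 2 - 4 * (4 * c - 1) * (4 * c - 4) ≠ 0 := by
    rw [show (4 - 4 * c) ^ 2 - 4 * (4 * c - 1) * (4 * c - 4) = 48 * c * (1 - c) by ring]
    exact mul_ne_zero (mul_ne_zero (by norm_num) hc) (sub_ne_zero.mpr (Ne.symm hc1))
  have := natDegree_eq_zero_of_C_mul_sq_eq_quadratic two_ne_zero
    (fun h0 => hc4 (by linarith)) hdisc h
  omega

theorem deg_y_k3_general (D : ℕ) (hD : Squarefree D) (hD3 : D ≠ 3)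
    (t r q : ℚ[X]) (h : IsCompleteFamily 3 D t r q)
    (hr : r = (cyclotomic 3 ℚ).comp (t - 1))
    (hdeg : q.natDegree = r.natDegree) :
    ∀ y : ℚ[X], (D : ℚ[X]) * y ^ 2 = 4 * q - t ^ 2 → 2 * y.natDegree = t.natDegree := by
  intro y hy
  obtain ⟨-, hr0, -, hrp, -, hdvd, -⟩ := h
  have ht1 : (t - 1).natDegree = t.natDegree := by rw [← C_1, natDegree_sub_C]
  have hrdeg : r.natDegree = 2 * t.natDegree := by
    rw [hr, natDegree_comp, natDegree_cyclotomic, ht1, Nat.totient_prime Nat.prime_three]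
  have ht : 0 < t.natDegree := by have := hrp.1; omega
  have hle : (q + 1 - t).natDegree ≤ r.natDegree := by
    rw [show q + 1 - t = q - (t - 1) by ring]
    exact (natDegree_sub_le _ _).trans (max_le (by omega) (by omega))
  obtain ⟨c, hc⟩ := exists_eq_C_mul_of_dvd_of_natDegree_le hr0 hdvd hle
  have hc0 : c ≠ 0 := by
    rintro rfl
    rw [C_0, zero_mul, show q + 1 - t = q - (t - 1) by ring, sub_eq_zero] at hc
    rw [hc] at hdeg
    omega
  have hq : q = C c * (t ^ 2 - t + 1) + t - 1 := by
    rw [← cyclotomic_three_comp_sub_one, ← hr]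
    linear_combination hc
  refine two_mul_natDegree_eq_of_cm_equation hD hD3 ht hc0 ?_
  rw [C_eq_natCast, hy, hq]
  simp only [map_sub, map_mul, map_ofNat, map_one]
  ring

/-- Lemma 3.1 for `k = 3`: in an ideal family with `r = Φ_3(t - 1)` and `D ≠ 3`,
any CM polynomial `y` satisfies `2 deg y = deg t`. -/
theorem deg_y_k3 (D : ℕ) (hD : Squarefree D) (hDpos : 0 < D) (hD3 : D ≠ 3)
    (t r q : ℚ[X]) (h : IsCompleteFamily 3 D t r q)
    (hr : r = (cyclotomic 3 ℚ).comp (t - 1))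
    (hdeg : q.natDegree = r.natDegree) :
    ∀ y : ℚ[X], (D : ℚ[X]) * y ^ 2 = 4 * q - t ^ 2 → 2 * y.natDegree = t.natDegree :=
  deg_y_k3_general D hD hD3 t r q h hr hdeg
end

section
/- Let D be a squarefree positive integer with D ≠ 1. Suppose (t, r, q) parameterizes a complete family of pairing-friendly elliptic curves with embedding degree k = 4 and CM discriminant D such that r(x) = Φ_4(t(x) − 1) and deg q = deg r (i.e., ρ(t, r, q) = 1). Then every y ∈ ℚ[x] with D·y² = 4q − t² satisfies 2·deg y = deg t. -/
open Polynomial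

lemma squarefree_ne_ratsq {D : ℕ} (hD : Squarefree D) (hD1 : D ≠ 1) (m : ℚ)
    (h : m ^ 2 = (D : ℚ)) : False := by
  have h' : m * m = (D : ℚ) := by rw [← sq]; exact h
  have hnum : m.num * m.num = (D : ℤ) := by
    have := congrArg Rat.num h'
    rwa [Rat.mul_self_num, Rat.num_natCast] at this
  have hsf : Squarefree (D : ℤ) := Int.squarefree_natCast.mpr hD
  have hu : IsUnit m.num := hsf m.num (hnum ▸ dvd_refl _)
  have : (D : ℤ) = 1 := by
    rcases Int.isUnit_iff.mp hu with h1 | h1 <;> rw [h1] at hnum <;> omega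
  exact hD1 (by exact_mod_cast this)

/-- Lemma 3.1 for `k = 4`: in an ideal family with `r = Φ_4(t - 1)` and `D ≠ 1`,
any CM polynomial `y` satisfies `2 deg y = deg t`. -/
theorem deg_y_k4 (D : ℕ) (hD : Squarefree D) (hDpos : 0 < D) (hD1 : D ≠ 1)
    (t r q : ℚ[X]) (h : IsCompleteFamily 4 D t r q)
    (hr : r = (cyclotomic 4 ℚ).comp (t - 1))
    (hdeg : q.natDegree = r.natDegree) :
    ∀ y : ℚ[X], (D : ℚ[X]) * y ^ 2 = 4 * q - t ^ 2 → 2 * y.natDegree = t.natDegree := by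
  obtain ⟨ht0, hr0, hq0, hrp, _hqp, hdvd, _hc, _hy⟩ := h
  have hrp1 : 0 < r.natDegree := hrp.1

  have C2 : C (2:ℚ) = 2 := map_ofNat C 2
  have C4 : C (4:ℚ) = 4 := map_ofNat C 4
  intro y hy
  set DC : ℚ := (D : ℚ) with hDCdef
  have hDne : DC ≠ 0 := Nat.cast_ne_zero.mpr hDpos.ne'
  have hy' : C DC * y ^ 2 = 4 * q - t ^ 2 := by
    rw [hDCdef, C_eq_natCast]; exact hy
  -- cyclotomic 4 = X^2+1
  have hc4 : cyclotomic 4 ℚ = X ^ 2 + 1 := by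
    have h := Polynomial.cyclotomic_prime_pow_eq_geom_sum (R := ℚ) (p := 2) (n := 1) Nat.prime_two
    norm_num [Finset.sum_range_succ] at h
    linear_combination h
  have hr' : r = (t - 1) ^ 2 + 1 := by
    rw [hr, hc4]; simp [add_comp, pow_comp, X_comp, one_comp]
  set d := t.natDegree with hdDef
  have ht1d : (t - 1).natDegree = d := by
    rw [show (1 : ℚ[X]) = C 1 from (map_one C).symm, natDegree_sub_C]
  have htot : Nat.totient 4 = 2 := by decide
  have hrdeg : r.natDegree = 2 * d := by
    rw [hr, natDegree_comp, natDegree_cyclotomic, ht1d, htot]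
  have hd1 : 1 ≤ d := by omega
  have hqdeg : q.natDegree = 2 * d := hdeg.trans hrdeg
  -- Step A : q + 1 - t = r * C c
  obtain ⟨g, hg⟩ := hdvd
  have h2d0 : 2 * d ≠ 0 := by omega
  have hA : (q + 1 - t).coeff (2 * d) = q.leadingCoeff := by
    rw [coeff_sub, coeff_add, coeff_eq_zero_of_natDegree_lt (show t.natDegree < 2 * d by omega),
        coeff_one, if_neg h2d0, ← hqdeg, coeff_natDegree]
    ring
  have hlcq : q.leadingCoeff ≠ 0 := leadingCoeff_ne_zero.mpr hq0
  have hne : q + 1 - t ≠ 0 := fun h0 => hlcq (by rw [← hA, h0, coeff_zero])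
  have hgne : g ≠ 0 := by rintro rfl; rw [mul_zero] at hg; exact hne hg
  have hub : (q + 1 - t).natDegree ≤ 2 * d := by
    refine le_trans (natDegree_sub_le _ _) (max_le ?_ (by omega))
    refine le_trans (natDegree_add_le _ _) (max_le (by omega) (by simp))
  have hgdeg : g.natDegree = 0 := by
    have hmul := natDegree_mul hr0 hgne
    rw [← hg] at hmul
    omega
  obtain ⟨c, rfl⟩ : ∃ c, g = C c := ⟨g.coeff 0, g.eq_C_of_natDegree_eq_zero hgdeg⟩
  have hc0 : c ≠ 0 := fun h0 => hgne (by rw [h0, map_zero])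
  have hgr : q + 1 - t = ((t - 1) ^ 2 + 1) * C c := by rw [hg, hr']
  set κ : ℚ := 4 * c with hκdef
  have hκ0 : κ ≠ 0 := by simp [hκdef, hc0]
  have key : C DC * y ^ 2 + (t - 2) ^ 2 = C κ * ((t - 1) ^ 2 + 1) := by
    have h4 : C κ = 4 * C c := by rw [hκdef, map_mul, C4]
    rw [h4]; linear_combination hy' + 4 * hgr
  have hb : t.leadingCoeff ≠ 0 := leadingCoeff_ne_zero.mpr ht0
  set b : ℚ := t.leadingCoeff with hbdef
  by_cases hκ1 : κ = 1
  · -- Dy² = 2(t-1)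
    have h1 : C DC * y ^ 2 = C 2 * (t - 1) := by
      rw [hκ1, map_one] at key
      rw [C2]
      linear_combination key
    have ht1ne : t - 1 ≠ 0 := fun h0 => by rw [h0] at ht1d; simp at ht1d; omega
    have hRne : C (2:ℚ) * (t - 1) ≠ 0 := mul_ne_zero (by rw [C2]; norm_num) ht1ne
    have hyne : y ≠ 0 := by
      rintro rfl; rw [show (0:ℚ[X]) ^ 2 = 0 by ring, mul_zero] at h1; exact hRne h1.symm
    have := congrArg natDegree h1
    rwa [natDegree_C_mul hDne, natDegree_pow, natDegree_C_mul (by norm_num : (2:ℚ) ≠ 0),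
      ht1d] at this
  · exfalso
    -- expansion
    have hP : C DC * y ^ 2 = C (κ - 1) * t ^ 2 + C (4 - 2 * κ) * t + C (2 * κ - 4) := by
      have e1 : C (κ - 1) = C κ - 1 := by rw [map_sub, map_one]
      have e2 : C (4 - 2 * κ) = 4 - 2 * C κ := by rw [map_sub, map_mul, C2, C4]
      have e3 : C (2 * κ - 4) = 2 * C κ - 4 := by rw [map_sub, map_mul, C2, C4]
      rw [e1, e2, e3]; linear_combination key
    have hκ1' : κ - 1 ≠ 0 := sub_ne_zero.mpr hκ1
    -- coefficient at 2d
    have h1 : (t ^ 2).coeff (2 * d) = b ^ 2 := by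
      have hdeg2 : (t ^ 2).natDegree = 2 * d := by rw [natDegree_pow]
      rw [← hdeg2, coeff_natDegree, leadingCoeff_pow]
    have h2 : t.coeff (2 * d) = 0 := coeff_eq_zero_of_natDegree_lt (by omega)
    have h3 : (C (2 * κ - 4)).coeff (2 * d) = 0 := by rw [coeff_C, if_neg h2d0]
    have hcoe : DC * (y ^ 2).coeff (2 * d) = (κ - 1) * b ^ 2 := by
      have hc := congrArg (fun p => coeff p (2 * d)) hP
      simp only [coeff_add, coeff_C_mul] at hc
      rw [h1, h2, h3] at hc
      simpa using hc
    have hcne : (y ^ 2).coeff (2 * d) ≠ 0 := by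
      intro h0; rw [h0, mul_zero] at hcoe
      exact (mul_ne_zero hκ1' (pow_ne_zero _ hb)) hcoe.symm
    have hyne : y ≠ 0 := fun h0 => hcne (by simp [h0])
    have hlow : 2 * d ≤ (y ^ 2).natDegree := le_natDegree_of_ne_zero hcne
    have hupp : (y ^ 2).natDegree ≤ 2 * d := by
      have hrhs : (C (κ - 1) * t ^ 2 + C (4 - 2 * κ) * t + C (2 * κ - 4)).natDegree ≤ 2 * d := by
        refine le_trans (natDegree_add_le _ _)
          (max_le (le_trans (natDegree_add_le _ _) (max_le ?_ ?_)) ?_)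
        · exact le_trans (natDegree_C_mul_le _ _) (by rw [natDegree_pow])
        · exact le_trans (natDegree_C_mul_le _ _) (by omega)
        · simp only [natDegree_C]; omega
      calc (y ^ 2).natDegree = (C DC * y ^ 2).natDegree := (natDegree_C_mul hDne).symm
        _ = _ := by rw [hP]
        _ ≤ 2 * d := hrhs
    have hyd : (y ^ 2).natDegree = 2 * d := le_antisymm hupp hlow
    have hydeg : y.natDegree = d := by
      have := natDegree_pow y 2
      omega
    set a : ℚ := y.leadingCoeff with hadef
    have ha : a ≠ 0 := leadingCoeff_ne_zero.mpr hyne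
    have hlc : DC * a ^ 2 = (κ - 1) * b ^ 2 := by
      have h4 : (y ^ 2).coeff (2 * d) = a ^ 2 := by
        rw [← hyd, coeff_natDegree, leadingCoeff_pow]
      rw [h4] at hcoe; exact hcoe
    by_cases hκ2 : κ = 2
    · -- D = (b/a)²
      have hlc2 : DC * a ^ 2 = b ^ 2 := by rw [hκ2] at hlc; linarith [hlc]
      refine squarefree_ne_ratsq hD hD1 (b / a) ?_
      rw [div_pow, ← hDCdef]
      field_simp
      linarith [hlc2]
    · have hκ2' : κ - 2 ≠ 0 := sub_ne_zero.mpr hκ2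
      set u : ℚ[X] := (C κ - 1) * t + (2 - C κ) with hudef
      have hu : (C κ - 1) * (C DC * y ^ 2) = u ^ 2 + C κ * (C κ - 2) := by
        rw [hudef]; linear_combination (C κ - 1) * key
      have hlcP : C DC * C a ^ 2 = (C κ - 1) * C b ^ 2 := by
        have := congrArg C hlc
        simpa [map_mul, map_pow, map_sub, map_one] using this
      have hfg : (C DC * C a * y - C b * u) * (C DC * C a * y + C b * u)
          = C b ^ 2 * (C κ * (C κ - 2)) := by
        linear_combination C b ^ 2 * hu + (C DC * y ^ 2) * hlcP
      have hRHS : C (b ^ 2 * (κ * (κ - 2))) = C b ^ 2 * (C κ * (C κ - 2)) := by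
        rw [map_mul, map_mul, map_sub, map_pow, C2]
      rw [← hRHS] at hfg
      have hEne : b ^ 2 * (κ * (κ - 2)) ≠ 0 :=
        mul_ne_zero (pow_ne_zero _ hb) (mul_ne_zero hκ0 hκ2')
      have hprodne : (C DC * C a * y - C b * u) * (C DC * C a * y + C b * u) ≠ 0 := by
        rw [hfg]; exact C_ne_zero.mpr hEne
      have hf0 : C DC * C a * y - C b * u ≠ 0 := left_ne_zero_of_mul hprodne
      have hg0 : C DC * C a * y + C b * u ≠ 0 := right_ne_zero_of_mul hprodne
      have hdeg0 : (C DC * C a * y - C b * u).natDegree = 0 ∧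
          (C DC * C a * y + C b * u).natDegree = 0 := by
        have := natDegree_mul hf0 hg0
        rw [hfg, natDegree_C] at this
        omega
      have hsum : ((C DC * C a * y - C b * u) + (C DC * C a * y + C b * u)).natDegree ≤ 0 :=
        le_trans (natDegree_add_le _ _) (by omega)
      have hsum2 : (C DC * C a * y - C b * u) + (C DC * C a * y + C b * u)
          = C (2 * DC * a) * y := by
        rw [map_mul, map_mul, C2]; ring
      rw [hsum2, natDegree_C_mul (by simp [hDne, ha] : 2 * DC * a ≠ 0)] at hsum
      omega
end

section
/- If a triple (t, r, q) of nonzero polynomials in ℚ[x] parameterizes a complete family of pairing-friendly elliptic curves with embedding degree k = 8 and CM discriminant D = 1, and deg r ≠ 2·deg t, then ρ(t, r, q) ≠ 1, i.e., deg q ≠ deg r. -/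
open Polynomial

private lemma natDegree_sq_add_sq (a b : ℚ[X]) (hb : b ≠ 0)
    (h : a.natDegree ≤ b.natDegree) :
    (a ^ 2 + b ^ 2).natDegree = 2 * b.natDegree := by
  have hb2 : (b ^ 2).natDegree = 2 * b.natDegree := by
    rw [natDegree_pow]
  have ha2 : (a ^ 2).natDegree ≤ 2 * b.natDegree := by
    rw [natDegree_pow]; omega
  have hcb : (b ^ 2).coeff (2 * b.natDegree) = b.leadingCoeff ^ 2 := by
    rw [← hb2, coeff_natDegree, leadingCoeff_pow]
  have hca : ∃ c : ℚ, (a ^ 2).coeff (2 * b.natDegree) = c ^ 2 := by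
    rcases eq_or_lt_of_le h with he | hlt
    · rcases eq_or_ne a 0 with rfl | ha0
      · exact ⟨0, by simp⟩
      · refine ⟨a.leadingCoeff, ?_⟩
        have : 2 * b.natDegree = (a ^ 2).natDegree := by rw [natDegree_pow, he]
        rw [this, coeff_natDegree, leadingCoeff_pow]
    · refine ⟨0, ?_⟩
      have : (a ^ 2).natDegree < 2 * b.natDegree := by rw [natDegree_pow]; omega
      simp [coeff_eq_zero_of_natDegree_lt this]
  obtain ⟨c, hc⟩ := hca
  have hlcb : b.leadingCoeff ≠ 0 := leadingCoeff_ne_zero.mpr hb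
  have hne : (a ^ 2 + b ^ 2).coeff (2 * b.natDegree) ≠ 0 := by
    rw [coeff_add, hc, hcb]
    positivity
  refine le_antisymm ?_ (le_natDegree_of_ne_zero hne)
  refine le_trans (natDegree_add_le _ _) ?_
  simp only [natDegree_pow]
  omega

private lemma aux_k8 (u y r s k : ℚ[X]) (hm : 0 < u.natDegree)
    (hn : u.natDegree < y.natDegree) (hy0 : y ≠ 0)
    (hr2n : r.natDegree = 2 * y.natDegree) (hirr : Irreducible r)
    (hsum : y ^ 2 + (u - 1) ^ 2 = r * k)
    (hs : u ^ 4 + 1 = r * s)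
    (hdvd : r ∣ y - u ^ 2 * (u - 1)) : False := by
  have hr0 : r ≠ 0 := hirr.ne_zero
  have hu0 : u ≠ 0 := by
    rintro rfl; simp at hm
  have hvdeg : (u - 1).natDegree = u.natDegree := by
    rw [← C_1, natDegree_sub_C]
  have hv0 : u - 1 ≠ 0 := by
    intro h0; rw [h0, natDegree_zero] at hvdeg; omega
  have hudeg1 : (u + 1).natDegree = u.natDegree := by
    rw [← C_1, natDegree_add_C]
  have hu10 : u + 1 ≠ 0 := by
    intro h0; rw [h0, natDegree_zero] at hudeg1; omega
  have hu40 : u ^ 4 + 1 ≠ 0 := by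
    intro h0
    have h1 : (u ^ 4 + 1).natDegree = 4 * u.natDegree := by
      rw [← C_1, natDegree_add_C, natDegree_pow]
    rw [h0, natDegree_zero] at h1; omega
  have h2n4m : 2 * y.natDegree ≤ 4 * u.natDegree := by
    have h1 := natDegree_le_of_dvd ⟨s, hs⟩ hu40
    have h2 : (u ^ 4 + 1).natDegree = 4 * u.natDegree := by
      rw [← C_1, natDegree_add_C, natDegree_pow]
    omega
  obtain ⟨g, hg⟩ := hdvd
  set h : ℚ[X] := u ^ 2 * g + s * (u - 1) with hhdef
  have hgdeg : g.natDegree < u.natDegree := by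
    rcases eq_or_ne g 0 with rfl | hg0
    · simpa using hm
    · have h1 : (r * g).natDegree = 2 * y.natDegree + g.natDegree := by
        rw [natDegree_mul hr0 hg0, hr2n]
      have h3 : (u ^ 2 * (u - 1)).natDegree = 3 * u.natDegree := by
        rw [natDegree_mul (pow_ne_zero 2 hu0) hv0, natDegree_pow, hvdeg]; ring
      have h2 : (r * g).natDegree ≤ 3 * u.natDegree := by
        rw [← hg]
        refine le_trans (natDegree_sub_le _ _) (max_le ?_ (le_of_eq h3))
        omega
      omega
  have hrh : r * h = u ^ 2 * y + (u - 1) := by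
    rw [hhdef]; linear_combination (-(u ^ 2)) * hg - (u - 1) * hs
  have hhdeg : h.natDegree < u.natDegree := by
    rcases eq_or_ne h 0 with h0 | hh0
    · rw [h0]; simpa using hm
    · have h1 : (r * h).natDegree = 2 * y.natDegree + h.natDegree := by
        rw [natDegree_mul hr0 hh0, hr2n]
      have h2 : (u ^ 2 * y).natDegree = 2 * u.natDegree + y.natDegree := by
        rw [natDegree_mul (pow_ne_zero 2 hu0) hy0, natDegree_pow]
      have h3 : (r * h).natDegree = 2 * u.natDegree + y.natDegree := by
        rw [hrh, natDegree_add_eq_left_of_natDegree_lt, h2]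
        rw [h2, hvdeg]; omega
      omega
  have key : r * (h - g) = (u - 1) * (y * (u + 1) + (u ^ 2 + 1)) := by
    rw [hhdef]; linear_combination (1 - u ^ 2) * hg - (u - 1) * hs
  have hrv : ¬ r ∣ (u - 1) := by
    intro hd
    have := natDegree_le_of_dvd hd hv0
    omega
  have hcop : IsCoprime r (u - 1) := hirr.coprime_iff_not_dvd.mpr hrv
  have hdvdw : (u - 1) ∣ (h - g) := by
    have h1 : (u - 1) ∣ r * (h - g) := ⟨_, key⟩
    exact hcop.symm.dvd_of_dvd_mul_left h1
  have hw0 : h - g = 0 := by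
    by_contra hw
    have h1 := natDegree_le_of_dvd hdvdw hw
    have h2 : (h - g).natDegree < u.natDegree :=
      lt_of_le_of_lt (natDegree_sub_le _ _) (max_lt hhdeg hgdeg)
    omega
  have hZ : y * (u + 1) + (u ^ 2 + 1) = 0 := by
    have h1 : (u - 1) * (y * (u + 1) + (u ^ 2 + 1)) = 0 := by
      rw [← key, hw0, mul_zero]
    exact (mul_eq_zero.mp h1).resolve_left hv0
  have hfin : y * (u + 1) = -(u ^ 2 + 1) := by linear_combination hZ
  have hdegL : (y * (u + 1)).natDegree = y.natDegree + u.natDegree := by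
    rw [natDegree_mul hy0 hu10, hudeg1]
  have hdegR : (-(u ^ 2 + 1)).natDegree = 2 * u.natDegree := by
    rw [natDegree_neg, ← C_1, natDegree_add_C, natDegree_pow]
  rw [hfin, hdegR] at hdegL
  omega

/-- No ideal complete family with embedding degree 8 and CM discriminant 1 when
`deg r ≠ 2 deg t`. -/
theorem no_ideal_family_k8_D1 (t r q : ℚ[X]) (h : IsCompleteFamily 8 1 t r q)
    (hdeg : r.natDegree ≠ 2 * t.natDegree) :
    q.natDegree ≠ r.natDegree := by
  obtain ⟨ht0, hr0, hq0, hr, hq, hdvd1, hdvd2, y, hy⟩ := h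
  obtain ⟨hrdeg, hrirr, hrlc, -, -⟩ := hr
  obtain ⟨hqdeg, hqirr, hqlc, -, -⟩ := hq
  intro hQR
  have hy' : y ^ 2 = 4 * q - t ^ 2 := by
    have h1 : ((1 : ℕ) : ℚ[X]) * y ^ 2 = 4 * q - t ^ 2 := hy
    rw [Nat.cast_one, one_mul] at h1
    exact h1
  -- cyclotomic 8 ℚ = 1 + X ^ 4
  have hcyc : cyclotomic 8 ℚ = 1 + X ^ 4 := by
    have h1 := cyclotomic_prime_pow_eq_geom_sum (R := ℚ) (p := 2) (n := 2) Nat.prime_two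
    norm_num [Finset.sum_range_succ] at h1
    convert h1 using 2
  have hdvd2' : r ∣ (t - 1) ^ 4 + 1 := by
    have h1 : (cyclotomic 8 ℚ).comp (t - 1) = (t - 1) ^ 4 + 1 := by
      rw [hcyc]; simp [add_comp, pow_comp, X_comp, one_comp, add_comm]
    rwa [h1] at hdvd2
  -- deg t ≥ 1
  have hm : 0 < t.natDegree := by
    by_contra hm0
    obtain ⟨a, ha⟩ := natDegree_eq_zero.mp (show t.natDegree = 0 by omega)
    have hconst : (t - 1) ^ 4 + 1 = C ((a - 1) ^ 4 + 1) := by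
      rw [← ha]; simp only [map_add, map_pow, map_sub, map_one]
    have hane : ((a - 1) ^ 4 + 1 : ℚ) ≠ 0 := by positivity
    have h1 : r.natDegree ≤ (C ((a - 1) ^ 4 + 1) : ℚ[X]).natDegree :=
      natDegree_le_of_dvd (by rwa [hconst] at hdvd2') (C_ne_zero.mpr hane)
    rw [natDegree_C] at h1
    omega
  have hq4 : (4 * q).natDegree = q.natDegree := by
    have h4 : (4 : ℚ[X]) = C (4 : ℚ) := by
      rw [map_ofNat]
    rw [h4, natDegree_C_mul (by norm_num : (4 : ℚ) ≠ 0)]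
  have hy0 : y ≠ 0 := by
    intro h0
    have h1 : t ^ 2 = 4 * q := by rw [h0] at hy'; linear_combination hy'
    have h2 : (t ^ 2).natDegree = (4 * q).natDegree := by rw [h1]
    rw [natDegree_pow, hq4] at h2
    omega
  have h4q : 4 * q = t ^ 2 + y ^ 2 := by linear_combination - hy'
  rcases le_or_gt y.natDegree t.natDegree with hnm | hnm
  · have h1 : (y ^ 2 + t ^ 2).natDegree = 2 * t.natDegree :=
      natDegree_sq_add_sq y t ht0 hnm
    have h2 : 4 * q = y ^ 2 + t ^ 2 := by linear_combination - hy'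
    have h3 : q.natDegree = 2 * t.natDegree := by rw [← hq4, h2, h1]
    omega
  · have h1 : (t ^ 2 + y ^ 2).natDegree = 2 * y.natDegree :=
      natDegree_sq_add_sq t y hy0 hnm.le
    have h2n : q.natDegree = 2 * y.natDegree := by rw [← hq4, h4q, h1]
    obtain ⟨k, hk⟩ := hdvd1
    have hsum : y ^ 2 + ((t - 1) - 1) ^ 2 = r * (4 * k) := by
      linear_combination hy' + 4 * hk
    obtain ⟨s, hs⟩ : ∃ s, (t - 1) ^ 4 + 1 = r * s := hdvd2'
    have hprod : r ∣ (y - (t - 1) ^ 2 * ((t - 1) - 1)) * (y + (t - 1) ^ 2 * ((t - 1) - 1)) :=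
      ⟨4 * k - ((t - 1) - 1) ^ 2 * s, by
        linear_combination hsum - ((t - 1) - 1) ^ 2 * hs⟩
    have hprime : Prime r := UniqueFactorizationMonoid.irreducible_iff_prime.mp hrirr
    have hut : (t - 1).natDegree = t.natDegree := by rw [← C_1, natDegree_sub_C]
    have hr2n : r.natDegree = 2 * y.natDegree := by omega
    rcases hprime.2.2 _ _ hprod with hc | hc
    · exact aux_k8 (t - 1) y r s (4 * k) (by omega) (by omega) hy0 hr2n hrirr hsum hs hc
    · refine aux_k8 (t - 1) (-y) r s (4 * k) (by omega) ?_ (neg_ne_zero.mpr hy0) ?_ hrirr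
        (by linear_combination hsum) hs ?_
      · rw [natDegree_neg]; omega
      · rw [natDegree_neg]; exact hr2n
      · have : -y - (t - 1) ^ 2 * ((t - 1) - 1) = -(y + (t - 1) ^ 2 * ((t - 1) - 1)) := by ring
        rw [this]
        exact dvd_neg.mpr hc
end

section
/- If a triple (t, r, q) of nonzero polynomials in ℚ[x] parameterizes a complete family of pairing-friendly elliptic curves with embedding degree k = 8 and CM discriminant D = 2, and deg r ≠ 2·deg t, then ρ(t, r, q) ≠ 1, i.e., deg q ≠ deg r. -/
open Polynomial

private lemma natDeg_const_mul (c : ℚ) (hc : c ≠ 0) (p : ℚ[X]) :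
    ((C c : ℚ[X]) * p).natDegree = p.natDegree := natDegree_C_mul hc

/-- No ideal complete family with embedding degree 8 and CM discriminant 2 when
`deg r ≠ 2 deg t`. -/
theorem no_ideal_family_k8_D2 (t r q : ℚ[X]) (h : IsCompleteFamily 8 2 t r q)
    (hdeg : r.natDegree ≠ 2 * t.natDegree) :
    q.natDegree ≠ r.natDegree := by
  obtain ⟨ht0, hr0, hq0, hrp, hqp, hdvd1, hdvd2, y, hy⟩ := h
  have hy2 : (2:ℚ[X]) * y ^ 2 = 4 * q - t ^ 2 := by
    push_cast at hy; exact hy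
  have hΦ : (cyclotomic 8 ℚ).comp (t - 1) = (t-1)^4 + 1 := by
    rw [show (8:ℕ) = 2^(2+1) by norm_num, cyclotomic_prime_pow_eq_geom_sum Nat.prime_two]
    simp [Finset.sum_range_succ, add_comp, one_comp, pow_comp, X_comp]
    ring
  rw [hΦ] at hdvd2
  intro hqr
  have hltc : t.leadingCoeff ≠ 0 := leadingCoeff_ne_zero.mpr ht0
  have h4C : (4:ℚ[X]) = C (4:ℚ) := (map_ofNat C 4).symm
  have h2C : (2:ℚ[X]) = C (2:ℚ) := (map_ofNat C 2).symm
  have h4deg : (4 * q).natDegree = r.natDegree := by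
    rw [h4C, natDegree_C_mul (by norm_num : (4:ℚ) ≠ 0), hqr]
  have ht2deg : (t^2).natDegree = 2 * t.natDegree := natDegree_pow ..
  rcases lt_trichotomy r.natDegree (2 * t.natDegree) with hlt | heq | hgt
  · -- case deg r < 2 deg t : sign contradiction
    have hdlt : (4*q).natDegree < (t^2).natDegree := by omega
    have hsub : (t^2 - 4*q).natDegree = (t^2).natDegree :=
      natDegree_sub_eq_left_of_natDegree_lt hdlt
    have hne : t^2 - 4*q ≠ 0 := by
      intro h0
      rw [h0, natDegree_zero] at hsub
      omega
    have hyne : y ≠ 0 := by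
      intro h0
      apply hne
      rw [h0] at hy2
      linear_combination hy2
    have hlc : (t^2 - 4*q).leadingCoeff = (t^2).leadingCoeff :=
      leadingCoeff_sub_of_degree_lt (degree_lt_degree hdlt)
    have key : (2:ℚ[X]) * y^2 = -(t^2 - 4*q) := by linear_combination hy2
    have hlcs := congrArg leadingCoeff key
    rw [leadingCoeff_neg, hlc, leadingCoeff_pow, h2C, leadingCoeff_mul, leadingCoeff_C,
      leadingCoeff_pow] at hlcs
    have h1 : 0 < t.leadingCoeff ^ 2 := by positivity
    have h2 : 0 ≤ y.leadingCoeff ^ 2 := sq_nonneg _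
    nlinarith
  · exact hdeg heq
  · -- case deg r > 2 deg t
    have hdlt : (t^2).natDegree < (4*q).natDegree := by omega
    have hsub : (4*q - t^2).natDegree = (4*q).natDegree :=
      natDegree_sub_eq_left_of_natDegree_lt hdlt
    have hne : 4*q - t^2 ≠ 0 := by
      intro h0
      rw [h0, natDegree_zero] at hsub
      omega
    have hyne : y ≠ 0 := by
      intro h0
      apply hne
      rw [h0] at hy2
      linear_combination -hy2
    have hm : 2 * y.natDegree = r.natDegree := by
      have hh := congrArg natDegree hy2
      rwa [h2C, natDegree_C_mul (by norm_num : (2:ℚ) ≠ 0), natDegree_pow, hsub, h4deg] at hh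
    have hmd : t.natDegree < y.natDegree := by omega
    set P₁ : ℚ[X] := t*y - (t-1) with hP₁
    set P₂ : ℚ[X] := t*y + (t-1) with hP₂
    have key : (2:ℚ[X]) * (P₁ * P₂) = 4 * t^2 * (q + 1 - t) - ((t-1)^4 + 1) := by
      rw [hP₁, hP₂]; linear_combination t^2 * hy2
    have hdvd : r ∣ (2:ℚ[X]) * (P₁ * P₂) := by
      rw [key]; exact dvd_sub (hdvd1.mul_left _) hdvd2
    have hprime : Prime r := hrp.2.1.prime
    have hnot2 : ¬ r ∣ (2:ℚ[X]) := by
      intro hd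
      have := natDegree_le_of_dvd hd (by norm_num)
      rw [h2C, natDegree_C] at this
      omega
    have htyd : (t*y).natDegree = t.natDegree + y.natDegree := natDegree_mul ht0 hyne
    have ht1d : (t - 1).natDegree ≤ t.natDegree := by
      rw [show (1:ℚ[X]) = C 1 from (map_one C).symm, natDegree_sub_C]
    have hfin : ∀ P : ℚ[X], P = t*y - (t-1) ∨ P = t*y + (t-1) → r ∣ P → False := by
      rintro P hPe hdP
      have hPne : P ≠ 0 := by
        intro h0
        have hty : (t*y).natDegree ≤ t.natDegree := by
          rcases hPe with hPe | hPe
          · have : t*y = t - 1 := by rw [h0] at hPe; linear_combination -hPe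
            rw [this]; exact ht1d
          · have : t*y = -(t - 1) := by rw [h0] at hPe; linear_combination -hPe
            rw [this, natDegree_neg]; exact ht1d
        omega
      have hPd : P.natDegree ≤ t.natDegree + y.natDegree := by
        rcases hPe with hPe | hPe <;> rw [hPe]
        · exact le_trans (natDegree_sub_le _ _) (by rw [htyd]; omega)
        · exact le_trans (natDegree_add_le _ _) (by rw [htyd]; omega)
      have := natDegree_le_of_dvd hdP hPne
      omega
    rcases (hprime.2.2 _ _ hdvd).resolve_left hnot2 with hd
    rcases hprime.2.2 _ _ hd with hd1 | hd2
    · exact hfin _ (Or.inl rfl) hd1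
    · exact hfin _ (Or.inr rfl) hd2
end

section
/- Let k be a positive integer, D a positive integer, and r ∈ ℚ[x] a nonconstant irreducible polynomial, so that L = ℚ[x]/(r) is a field; write [f] for the class of f ∈ ℚ[x] in L. Let t, y ∈ ℚ[x] and suppose: ζ := [t − 1] is a primitive kth root of unity in L; there exists δ ∈ L with δ² = −D and [y]·δ = ζ − 1 (i.e., [y] = (ζ − 1)/δ). Define q := (1/4)(t² + D·y²) ∈ ℚ[x]. Then r divides Φ_k(t − 1) in ℚ[x] and r divides q + 1 − t in ℚ[x]. -/
open Polynomial

/-- Core divisibility content of the Brezing–Weng construction: if `[t-1]` is a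
primitive `k`th root of unity in `L = ℚ[x]/(r)`, `δ² = -D` in `L`, `[y]·δ = [t-1] - 1`,
and `q = (1/4)(t² + D·y²)`, then `r ∣ Φ_k(t-1)` and `r ∣ q + 1 - t`. -/
theorem brezing_weng_divisibility (k : ℕ) (hk : 0 < k) (D : ℕ) (hDpos : 0 < D)
    (r : ℚ[X]) (hr0 : 0 < r.natDegree) (hr : Irreducible r) (t y : ℚ[X])
    (hζ : IsPrimitiveRoot (Ideal.Quotient.mk (Ideal.span {r}) (t - 1)) k)
    (hδ : ∃ δ : ℚ[X] ⧸ Ideal.span {r}, δ ^ 2 = -(D : ℚ[X] ⧸ Ideal.span {r}) ∧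
      Ideal.Quotient.mk (Ideal.span {r}) y * δ =
        Ideal.Quotient.mk (Ideal.span {r}) (t - 1) - 1)
    (q : ℚ[X]) (hq : q = C (1/4 : ℚ) * (t ^ 2 + (D : ℚ[X]) * y ^ 2)) :
    r ∣ (cyclotomic k ℚ).comp (t - 1) ∧ r ∣ (q + 1 - t) := by
  haveI hmax : (Ideal.span {r}).IsMaximal :=
    PrincipalIdealRing.isMaximal_of_irreducible hr
  letI : Field (ℚ[X] ⧸ Ideal.span {r}) := Ideal.Quotient.field _
  set φ := Ideal.Quotient.mk (Ideal.span {r}) with hφ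
  have hdvd : ∀ f : ℚ[X], φ f = 0 → r ∣ f := by
    intro f hf
    rwa [hφ, Ideal.Quotient.eq_zero_iff_mem, Ideal.mem_span_singleton] at hf
  obtain ⟨δ, hδ2, hyδ⟩ := hδ
  set τ := φ t with hτ
  set η := φ y with hη
  have hζτ : φ (t - 1) = τ - 1 := by simp [hτ]
  constructor
  · apply hdvd
    have hcomp : φ ((cyclotomic k ℚ).comp (t - 1)) =
        aeval (φ (t - 1)) (cyclotomic k ℚ) := by
      rw [Polynomial.comp, aeval_def, hom_eval₂]
      rfl
    rw [hcomp, aeval_def, ← eval_map, map_cyclotomic]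
    exact (hζ.isRoot_cyclotomic hk).eq_zero
  · apply hdvd
    have hyδ' : η * δ = τ - 2 := by
      rw [hyδ, hζτ]; ring
    have hA : (D : ℚ[X] ⧸ Ideal.span {r}) * η ^ 2 = -(τ - 2) ^ 2 := by
      linear_combination η ^ 2 * hδ2 - (η * δ + τ - 2) * hyδ'
    set u := φ (C (1/4 : ℚ)) with hu'
    have hu : u * 4 = 1 := by
      have h4 : (4 : ℚ[X]) = C 4 := (map_ofNat C 4).symm
      rw [hu', ← map_ofNat φ 4, ← map_mul, h4, ← C_mul]
      norm_num
    have hq' : φ (q + 1 - t) = u * (τ ^ 2 + (D : ℚ[X] ⧸ Ideal.span {r}) * η ^ 2) + 1 - τ := by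
      rw [hq]
      push_cast
      rw [map_sub, map_add, map_mul, map_add, map_pow, map_mul, map_pow, map_one, map_natCast]
    rw [hq']
    linear_combination u * hA + (τ - 1) * hu
end

section
/- Let k ∈ {8, 12} and let D be a squarefree positive integer. Suppose (t, r, q) parameterizes a complete family of pairing-friendly elliptic curves with embedding degree k and CM discriminant D, with deg q = deg r (i.e., ρ(t, r, q) = 1) and deg r ≠ 2·deg t. Then deg r ≤ 4·deg t, 2·deg t < deg r, and every y ∈ ℚ[x] with D·y² = 4q − t² satisfies 2·deg y = deg r. -/
open Polynomial

/-- For `k ∈ {8, 12}`: in an ideal complete family with `deg r ≠ 2 deg t`, one has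
`deg r ≤ 4 deg t`, `2 deg t < deg r`, and every CM polynomial `y` satisfies
`2 deg y = deg r`. -/
theorem ideal_family_degrees_k8_k12 (k D : ℕ) (hk : k = 8 ∨ k = 12)
    (hD : Squarefree D) (hDpos : 0 < D) (t r q : ℚ[X])
    (h : IsCompleteFamily k D t r q)
    (hdeg : q.natDegree = r.natDegree)
    (hne : r.natDegree ≠ 2 * t.natDegree) :
    r.natDegree ≤ 4 * t.natDegree ∧ 2 * t.natDegree < r.natDegree ∧
      ∀ y : ℚ[X], (D : ℚ[X]) * y ^ 2 = 4 * q - t ^ 2 →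
        2 * y.natDegree = r.natDegree := by
  obtain ⟨ht0, hr0, hq0, hrp, hqp, hdvd1, hdvd2, y0, hy0⟩ := h
  have hkpos : 0 < k := by rcases hk with rfl | rfl <;> norm_num
  have hcycirr : Irreducible (cyclotomic k ℚ) := cyclotomic.irreducible_rat hkpos
  have hcycdeg : (cyclotomic k ℚ).natDegree = 4 := by
    rw [natDegree_cyclotomic]
    rcases hk with rfl | rfl <;> decide
  -- the composition Φ_k(t-1) is nonzero
  have hcomp_ne : (cyclotomic k ℚ).comp (t - 1) ≠ 0 := by
    intro hc
    rcases (comp_eq_zero_iff).mp hc with hc0 | ⟨hev, _⟩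
    · exact hcycirr.ne_zero hc0
    · -- the cyclotomic polynomial would have a rational root, impossible for degree 4
      set a := (t - 1).coeff 0
      have hdvd : X - C a ∣ cyclotomic k ℚ := dvd_iff_isRoot.mpr hev
      obtain ⟨c, hcfac⟩ := hdvd
      rcases hcycirr.isUnit_or_isUnit hcfac with hu | hu
      · exact not_isUnit_X_sub_C a hu
      · have hc0 : c ≠ 0 := by
          rintro rfl
          exact hcycirr.ne_zero (by simpa using hcfac)
        have : (cyclotomic k ℚ).natDegree = 1 := by
          rw [hcfac, natDegree_mul (X_sub_C_ne_zero a) hc0, natDegree_X_sub_C,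
            natDegree_eq_zero_of_isUnit hu]
        omega
  have hrposdeg : 0 < r.natDegree := hrp.1
  -- part 1 : deg r ≤ 4 deg t
  have h1 : r.natDegree ≤ 4 * t.natDegree := by
    have := natDegree_le_of_dvd hdvd2 hcomp_ne
    rw [natDegree_comp, hcycdeg] at this
    have hle : (t - 1).natDegree ≤ t.natDegree := by
      calc (t - 1).natDegree ≤ max t.natDegree (1 : ℚ[X]).natDegree := natDegree_sub_le t 1
        _ = t.natDegree := by simp
    omega
  -- part 2 : 2 deg t < deg r
  have h2 : 2 * t.natDegree < r.natDegree := by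
    rcases lt_or_gt_of_ne hne with hlt | hgt
    · exfalso
      -- then deg q < deg t², so 4q - t² has negative leading coefficient,
      -- but D·y₀² has nonnegative leading coefficient
      have hq_lt : (4 * q).degree < (t ^ 2).degree := by
        apply degree_lt_degree
        rw [show (4 : ℚ[X]) = C 4 from (map_ofNat C 4).symm,
          natDegree_C_mul (by norm_num), natDegree_pow]
        omega
      have hlead : (4 * q - t ^ 2).leadingCoeff = -(t ^ 2).leadingCoeff := by
        rw [sub_eq_add_neg, leadingCoeff_add_of_degree_lt (by rwa [degree_neg]),
          leadingCoeff_neg]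
      have hlhs : ((D : ℚ[X]) * y0 ^ 2).leadingCoeff = (D : ℚ) * y0.leadingCoeff ^ 2 := by
        rw [show ((D : ℚ[X])) = C (D : ℚ) from (C_eq_natCast D).symm, leadingCoeff_mul,
          leadingCoeff_C, leadingCoeff_pow]
      have hnonneg : 0 ≤ ((D : ℚ[X]) * y0 ^ 2).leadingCoeff := by
        rw [hlhs]
        positivity
      rw [hy0, hlead, leadingCoeff_pow] at hnonneg
      have htlc : t.leadingCoeff ≠ 0 := leadingCoeff_ne_zero.mpr ht0
      have h0 : t.leadingCoeff ^ 2 = 0 := le_antisymm (by linarith) (sq_nonneg _)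
      exact htlc (pow_eq_zero_iff two_ne_zero |>.mp h0)
    · exact hgt
  refine ⟨h1, h2, fun y hy => ?_⟩
  -- part 3 : every CM polynomial has 2 deg y = deg r
  have hDne : (D : ℚ) ≠ 0 := Nat.cast_ne_zero.mpr hDpos.ne'
  have hq4 : (4 * q).natDegree = r.natDegree := by
    rw [show (4 : ℚ[X]) = C 4 from (map_ofNat C 4).symm,
      natDegree_C_mul (by norm_num : (4 : ℚ) ≠ 0), hdeg]
  have hsub : (4 * q - t ^ 2).natDegree = r.natDegree := by
    rw [natDegree_sub_eq_left_of_natDegree_lt, hq4]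
    rw [hq4, natDegree_pow]
    omega
  have hsub_ne : 4 * q - t ^ 2 ≠ 0 := by
    intro hc
    rw [hc, natDegree_zero] at hsub
    omega
  have hy_ne : y ≠ 0 := by
    rintro rfl
    simp at hy
    exact hsub_ne hy.symm
  have : ((D : ℚ[X]) * y ^ 2).natDegree = r.natDegree := by rw [hy]; exact hsub
  rw [show ((D : ℚ[X])) = C (D : ℚ) from (C_eq_natCast D).symm,
    natDegree_C_mul hDne, natDegree_pow] at this
  omega
end
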